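/- arXiv:1403.3663 — 6 statements merged into one kernel-verified Lean document; each statement's English description precedes it below -/
import Mathlib

section
/- Let A and B be complex unital Banach algebras, T : A → B a unital algebra homomorphism, a ∈ A, b = T(a), λ ∈ ℂ. Suppose there exists an idempotent p ∈ A with T(p) ≠ 0 such that: T(p(a-λ)(1-p)) = 0, T((1-p)(a-λ)p) = 0, T((1-p)(a-λ)(1-p)) is invertible in the corner algebra (1-q)B(1-q) where q = T(p), and T(p(a-λ)p) is quasi-nilpotent in B. Then λ is an isolated point of the spectrum of b. -/
open Filter Topology
open scoped NNReal ENNReal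

/-- If `X` is a two-sided inverse of `x` and `v` commutes with `x`, then `X` commutes
with `v`. -/
lemma inv_comm_aux {B : Type*} [Ring B] {x X v : B} (hxX : x * X = 1) (hXx : X * x = 1)
    (h : v * x = x * v) : X * v = v * X := by
  calc X * v = X * v * (x * X) := by rw [hxX, mul_one]
    _ = X * (v * x) * X := by noncomm_ring
    _ = X * (x * v) * X := by rw [h]
    _ = (X * x) * (v * X) := by noncomm_ring
    _ = v * X := by rw [hXx, one_mul]

/-- sufficient condition (via an idempotent lifting) for `λ` to be an
isolated point of the spectrum of `b = T a`. -/
theorem isolated_of_idempotent_decomposition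
    {A B : Type*} [NormedRing A] [NormedAlgebra ℂ A] [CompleteSpace A]
    [NormedRing B] [NormedAlgebra ℂ B] [CompleteSpace B] [Nontrivial B]
    (T : A →ₐ[ℂ] B) (a : A) (l : ℂ) (p : A) (hp : p * p = p) (hq0 : T p ≠ 0)
    (h1 : T (p * (a - algebraMap ℂ A l) * (1 - p)) = 0)
    (h2 : T ((1 - p) * (a - algebraMap ℂ A l) * p) = 0)
    (h3 : ∃ z : B, z = (1 - T p) * z * (1 - T p) ∧
      T ((1 - p) * (a - algebraMap ℂ A l) * (1 - p)) * z = 1 - T p ∧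
      z * T ((1 - p) * (a - algebraMap ℂ A l) * (1 - p)) = 1 - T p)
    (h4 : spectrum ℂ (T (p * (a - algebraMap ℂ A l) * p)) = {0}) :
    l ∈ spectrum ℂ (T a) ∧ ∀ᶠ μ in nhdsWithin l {l}ᶜ, μ ∉ spectrum ℂ (T a) := by
  obtain ⟨z, hz1, hz2, hz3⟩ := h3
  set q : B := T p with hqdef
  have hq : q * q = q := by rw [hqdef, ← map_mul, hp]
  set c : B := T a - algebraMap ℂ B l with hcdef
  have hc : T (a - algebraMap ℂ A l) = c := by rw [map_sub, AlgHom.commutes]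
  have hT1 : (1 : B) - q = T (1 - p) := by rw [map_sub, map_one]
  have h1' : q * c * (1 - q) = 0 := by
    rw [hT1, ← hc, hqdef, ← map_mul, ← map_mul]; exact h1
  have h2' : (1 - q) * c * q = 0 := by
    rw [hT1, ← hc, hqdef, ← map_mul, ← map_mul]; exact h2
  set n : B := q * c * q with hndef
  have hn : T (p * (a - algebraMap ℂ A l) * p) = n := by
    rw [map_mul, map_mul, hc, ← hqdef, hndef]
  set d : B := (1 - q) * c * (1 - q) with hddef
  have hD : T ((1 - p) * (a - algebraMap ℂ A l) * (1 - p)) = d := by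
    rw [map_mul, map_mul, hc, ← hT1, hddef]
  -- basic idempotent facts
  have hq10 : q * (1 - q) = 0 := by rw [mul_sub, mul_one, hq, sub_self]
  have h10q : (1 - q) * q = 0 := by rw [sub_mul, one_mul, hq, sub_self]
  -- commutation of q with c
  have hqc : q * c = n := by
    have e : q * c = q * c * q + q * c * (1 - q) := by noncomm_ring
    rw [e, h1', add_zero, hndef]
  have hcq : c * q = n := by
    have e : c * q = q * c * q + (1 - q) * c * q := by noncomm_ring
    rw [e, h2', add_zero, hndef]
  have hcomm : q * c = c * q := hqc.trans hcq.symm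
  have hsplit : c = n + d := by
    have e : c = q * c * q + q * c * (1 - q) + (1 - q) * c * q + (1 - q) * c * (1 - q) := by
      noncomm_ring
    rw [e, h1', h2', ← hndef, ← hddef]; abel
  have hnq : n * q = n := by
    calc n * q = q * c * (q * q) := by rw [hndef]; noncomm_ring
      _ = n := by rw [hq, hndef]
  have hqn : q * n = n := by
    calc q * n = (q * q) * (c * q) := by rw [hndef]; noncomm_ring
      _ = q * c * q := by rw [hq]; noncomm_ring
      _ = n := by rw [hndef]
  -- facts about z
  have hqz : q * z = 0 := by
    calc q * z = q * ((1 - q) * z * (1 - q)) := by rw [← hz1]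
      _ = (q * (1 - q)) * (z * (1 - q)) := by noncomm_ring
      _ = 0 := by rw [hq10, zero_mul]
  have hzq : z * q = 0 := by
    calc z * q = ((1 - q) * z * (1 - q)) * q := by rw [← hz1]
      _ = ((1 - q) * z) * ((1 - q) * q) := by noncomm_ring
      _ = 0 := by rw [h10q, mul_zero]
  have hdz : d * z = 1 - q := by rw [← hD]; exact hz2
  have hzd : z * d = 1 - q := by rw [← hD]; exact hz3
  have hqd : q * d = 0 := by
    calc q * d = (q * (1 - q)) * (c * (1 - q)) := by rw [hddef]; noncomm_ring
      _ = 0 := by rw [hq10, zero_mul]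
  have hdq : d * q = 0 := by
    calc d * q = ((1 - q) * c) * ((1 - q) * q) := by rw [hddef]; noncomm_ring
      _ = 0 := by rw [h10q, mul_zero]
  have hnz : n * z = 0 := by
    have e : n * z = n * (q * z) := by rw [← mul_assoc, hnq]
    rw [e, hqz, mul_zero]
  constructor
  · -- l is in the spectrum
    rw [spectrum.mem_iff]
    intro hu
    have hu2 : IsUnit c := by
      have := hu.neg
      rw [neg_sub] at this
      rwa [hcdef]
    obtain ⟨u, huu⟩ := hu2
    have hcy : c * ↑u⁻¹ = 1 := by rw [← huu]; exact u.mul_inv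
    have hyc : (↑u⁻¹ : B) * c = 1 := by rw [← huu]; exact u.inv_mul
    set y : B := ↑u⁻¹ with hydef
    have hyq : y * q = q * y := inv_comm_aux hcy hyc hcomm
    set w : B := q * y with hwdef
    have hnw : n * w = q := by
      calc n * w = q * (c * (q * q)) * y := by rw [hndef, hwdef]; noncomm_ring
        _ = q * (c * q) * y := by rw [hq]
        _ = q * (q * c) * y := by rw [hcomm]
        _ = (q * q) * (c * y) := by noncomm_ring
        _ = q := by rw [hq, hcy, mul_one]
    have hwn : w * n = q := by
      calc w * n = q * (y * q) * (c * q) := by rw [hndef, hwdef]; noncomm_ring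
        _ = q * (q * y) * (c * q) := by rw [hyq]
        _ = (q * q) * (y * c) * q := by noncomm_ring
        _ = q := by rw [hq, hyc, mul_one, hq]
    have hcm : Commute n w := hnw.trans hwn.symm
    have hw0 : w ≠ 0 := by
      intro h
      apply hq0
      rw [← hnw, h, mul_zero]
    have hqpow : ∀ k : ℕ, q ^ (k + 1) = q := by
      intro k
      induction k with
      | zero => simp
      | succ k ih => rw [pow_succ, ih, hq]
    have hkey : ∀ k : ℕ, q = n ^ (k + 1) * w ^ (k + 1) := by
      intro k
      rw [← hcm.mul_pow, hnw, hqpow]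
    have hqpos : (0 : ℝ) < ‖q‖ := norm_pos_iff.mpr hq0
    have hqnorm : 1 ≤ ‖q‖ := by
      have h1n : ‖q‖ ≤ ‖q‖ * ‖q‖ := by
        calc ‖q‖ = ‖q * q‖ := by rw [hq]
          _ ≤ ‖q‖ * ‖q‖ := norm_mul_le q q
      nlinarith
    -- Gelfand formula
    have hsr : spectralRadius ℂ n = 0 := by
      rw [← hn]
      unfold spectralRadius
      rw [h4]
      simp
    have htend := spectrum.pow_nnnorm_pow_one_div_tendsto_nhds_spectralRadius
      (T (p * (a - algebraMap ℂ A l) * p))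
    rw [hn, hsr] at htend
    have hwpos : (0 : ℝ) < ‖w‖ := norm_pos_iff.mpr hw0
    have hεpos : (0 : ℝ≥0∞) < ((‖w‖₊ + 1)⁻¹ : ℝ≥0) := by
      simp only [ENNReal.coe_pos]
      positivity
    obtain ⟨k, hk, hk1⟩ :=
      ((htend.eventually_lt_const hεpos).and (eventually_ge_atTop 1)).exists
    have hkpos : (0 : ℝ) < (k : ℝ) := by exact_mod_cast hk1
    have hk' : (‖n ^ k‖₊ : ℝ≥0∞) < (((‖w‖₊ + 1)⁻¹ : ℝ≥0) : ℝ≥0∞) ^ (k : ℝ) := by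
      have h := ENNReal.rpow_lt_rpow hk hkpos
      rwa [← ENNReal.rpow_mul, one_div, inv_mul_cancel₀ (ne_of_gt hkpos),
        ENNReal.rpow_one] at h
    have hk'' : ‖n ^ k‖₊ < ((‖w‖₊ + 1)⁻¹ : ℝ≥0) ^ k := by
      rw [ENNReal.rpow_natCast, ← ENNReal.coe_pow, ENNReal.coe_lt_coe] at hk'
      exact hk'
    have HR : ‖n ^ k‖ < ((‖w‖ + 1)⁻¹) ^ k := by
      have := hk''
      rw [← NNReal.coe_lt_coe] at this
      push_cast at this
      convert this using 3
    obtain ⟨m, rfl⟩ : ∃ m, k = m + 1 := ⟨k - 1, by omega⟩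
    have hchain : (1 : ℝ) ≤ ‖n ^ (m + 1)‖ * ‖w‖ ^ (m + 1) := by
      calc (1 : ℝ) ≤ ‖q‖ := hqnorm
        _ = ‖n ^ (m + 1) * w ^ (m + 1)‖ := by rw [← hkey m]
        _ ≤ ‖n ^ (m + 1)‖ * ‖w ^ (m + 1)‖ := norm_mul_le _ _
        _ ≤ ‖n ^ (m + 1)‖ * ‖w‖ ^ (m + 1) := by
            gcongr
            exact norm_pow_le' w (Nat.succ_pos m)
    have hrat : ‖w‖ * (‖w‖ + 1)⁻¹ < 1 := by
      rw [← div_eq_mul_inv, div_lt_one (by positivity)]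
      linarith
    have hpow1 : (‖w‖ * (‖w‖ + 1)⁻¹) ^ (m + 1) ≤ 1 :=
      pow_le_one₀ (by positivity) hrat.le
    have hlt : ‖n ^ (m + 1)‖ * ‖w‖ ^ (m + 1) < ((‖w‖ + 1)⁻¹) ^ (m + 1) * ‖w‖ ^ (m + 1) :=
      mul_lt_mul_of_pos_right HR (by positivity)
    have heq : ((‖w‖ + 1)⁻¹) ^ (m + 1) * ‖w‖ ^ (m + 1) = (‖w‖ * (‖w‖ + 1)⁻¹) ^ (m + 1) := by
      rw [← mul_pow]; ring_nf
    rw [heq] at hlt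
    linarith
  · -- isolation
    have hsub : Tendsto (fun μ : ℂ => μ - l) (𝓝 l) (𝓝 0) := by
      have := (continuous_id.sub (continuous_const (y := l))).tendsto l
      rw [← sub_self l]; exact this
    have hcont : Tendsto (fun μ : ℂ => ‖μ - l‖ * ‖z‖) (𝓝 l) (𝓝 0) := by
      have := (hsub.norm).mul_const ‖z‖
      simpa using this
    have hev : ∀ᶠ μ in 𝓝 l, ‖μ - l‖ * ‖z‖ < 1 :=
      hcont.eventually_lt_const (by norm_num)
    filter_upwards [hev.filter_mono nhdsWithin_le_nhds, self_mem_nhdsWithin] with μ hμ hμne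
    rw [Set.mem_compl_iff, Set.mem_singleton_iff] at hμne
    rw [spectrum.notMem_iff]
    have hEc : algebraMap ℂ B μ - T a = algebraMap ℂ B (μ - l) - c := by
      rw [map_sub, hcdef]; abel
    rw [hEc]
    set t : ℂ := μ - l with htdef
    have ht0 : t ≠ 0 := sub_ne_zero.mpr hμne
    -- inverse of the n-corner
    have htn : IsUnit (algebraMap ℂ B t - n) := by
      have hmem : t ∉ spectrum ℂ (T (p * (a - algebraMap ℂ A l) * p)) := by
        rw [h4]; simpa using ht0
      rwa [spectrum.notMem_iff, hn] at hmem
    obtain ⟨u, huu⟩ := htn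
    have hxY : (algebraMap ℂ B t - n) * ↑u⁻¹ = 1 := by rw [← huu]; exact u.mul_inv
    have hYx : (↑u⁻¹ : B) * (algebraMap ℂ B t - n) = 1 := by rw [← huu]; exact u.inv_mul
    set Y : B := ↑u⁻¹ with hYdef
    have hAq : q * (algebraMap ℂ B t - n) = (algebraMap ℂ B t - n) * q := by
      rw [mul_sub, sub_mul, hqn, hnq, Algebra.commutes]
    have hYq : Y * q = q * Y := inv_comm_aux hxY hYx hAq
    -- inverse of the d-corner
    have hs : ‖t • z‖ < 1 := by
      rw [norm_smul]
      exact hμ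
    set U : Bˣ := Units.oneSub (t • z) hs with hUdef
    have hUval : (U : B) = 1 - t • z := rfl
    have hg1 : (1 - t • z) * ↑U⁻¹ = 1 := by rw [← hUval]; exact U.mul_inv
    have hg2 : (↑U⁻¹ : B) * (1 - t • z) = 1 := by rw [← hUval]; exact U.inv_mul
    set g : B := ↑U⁻¹ with hgdef
    have hozq : (1 - t • z) * q = q := by
      rw [sub_mul, one_mul, smul_mul_assoc, hzq, smul_zero, sub_zero]
    have hqoz : q * (1 - t • z) = q := by
      rw [mul_sub, mul_one, mul_smul_comm, hqz, smul_zero, sub_zero]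
    have hgq : g * q = q := by
      calc g * q = g * ((1 - t • z) * q) := by rw [hozq]
        _ = (g * (1 - t • z)) * q := by rw [mul_assoc]
        _ = q := by rw [hg2, one_mul]
    have hqg : q * g = q := by
      calc q * g = (q * (1 - t • z)) * g := by rw [hqoz]
        _ = q * ((1 - t • z) * g) := by rw [mul_assoc]
        _ = q := by rw [hg1, mul_one]
    have hozd : (1 - t • z) * d = d * (1 - t • z) := by
      rw [sub_mul, mul_sub, mul_one, one_mul, smul_mul_assoc, mul_smul_comm, hzd, hdz]
    have hgd : g * d = d * g := inv_comm_aux hg1 hg2 hozd.symm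
    -- the candidate inverse
    set E : B := algebraMap ℂ B t - c with hEdef
    set V : B := q * Y - z * g with hVdef
    -- compute the pieces
    have hAd : (algebraMap ℂ B t - n) * (q * Y) = q := by
      calc (algebraMap ℂ B t - n) * (q * Y) = ((algebraMap ℂ B t - n) * q) * Y := by
            rw [mul_assoc]
        _ = (q * (algebraMap ℂ B t - n)) * Y := by rw [hAq]
        _ = q * ((algebraMap ℂ B t - n) * Y) := by rw [mul_assoc]
        _ = q := by rw [hxY, mul_one]
    have hdqY : d * (q * Y) = 0 := by rw [← mul_assoc, hdq, zero_mul]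
    have hnzg : n * (z * g) = 0 := by rw [← mul_assoc, hnz, zero_mul]
    have htzg : algebraMap ℂ B t * (z * g) = (t • z) * g := by
      rw [← Algebra.smul_def, smul_mul_assoc]
    have hdzg : d * (z * g) = g - q := by
      rw [← mul_assoc, hdz, sub_mul, one_mul, hqg]
    have hEV : E * V = 1 := by
      have e1 : E * V = (algebraMap ℂ B t - n) * (q * Y) - d * (q * Y)
          - (algebraMap ℂ B t * (z * g) - n * (z * g) - d * (z * g)) := by
        rw [hEdef, hVdef, hsplit]; noncomm_ring
      rw [e1, hAd, hdqY, hnzg, htzg, hdzg]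
      have e2 : (t • z) * g - (g - q) = q - (1 - t • z) * g := by noncomm_ring
      rw [sub_zero, sub_zero, e2, hg1]
      abel
    have hYA : (q * Y) * (algebraMap ℂ B t - n) = q := by
      calc (q * Y) * (algebraMap ℂ B t - n) = q * (Y * (algebraMap ℂ B t - n)) := by
            rw [mul_assoc]
        _ = q := by rw [hYx, mul_one]
    have hqYd : (q * Y) * d = 0 := by
      calc (q * Y) * d = (Y * q) * d := by rw [hYq]
        _ = Y * (q * d) := by rw [mul_assoc]
        _ = 0 := by rw [hqd, mul_zero]
    have hzgt : (z * g) * algebraMap ℂ B t = (t • z) * g := by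
      rw [mul_assoc, ← Algebra.commutes, ← Algebra.smul_def, mul_smul_comm, smul_mul_assoc]
    have hzgn : (z * g) * n = 0 := by
      calc (z * g) * n = (z * g) * (q * n) := by rw [hqn]
        _ = z * (g * q) * n := by noncomm_ring
        _ = (z * q) * n := by rw [hgq]
        _ = 0 := by rw [hzq, zero_mul]
    have hzgd : (z * g) * d = g - q := by
      calc (z * g) * d = z * (g * d) := by rw [mul_assoc]
        _ = z * (d * g) := by rw [hgd]
        _ = (z * d) * g := by rw [← mul_assoc]
        _ = (1 - q) * g := by rw [hzd]
        _ = g - q := by rw [sub_mul, one_mul, hqg]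
    have hVE : V * E = 1 := by
      have e1 : V * E = (q * Y) * (algebraMap ℂ B t - n) - (q * Y) * d
          - ((z * g) * algebraMap ℂ B t - (z * g) * n - (z * g) * d) := by
        rw [hEdef, hVdef, hsplit]; noncomm_ring
      rw [e1, hYA, hqYd, hzgt, hzgn, hzgd]
      have e2 : (t • z) * g - (g - q) = q - (1 - t • z) * g := by noncomm_ring
      rw [sub_zero, sub_zero, e2, hg1]
      abel
    exact ⟨⟨E, V, hEV, hVE⟩, rfl⟩
end

section
/- Let A and B be complex unital Banach algebras and T : A → B a unital algebra homomorphism. Suppose a ∈ A and p ∈ A is an idempotent with T(p) ≠ 0 such that T(pa(1-p)) = 0, T((1-p)ap) = 0, T(pap) is quasi-nilpotent, and T((1-p)a(1-p)) is invertible in the corner (1-q)B(1-q), where q = T(p). Then T(a) is Koliha-Drazin invertible in B but not invertible. -/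
open Filter Topology ENNReal NNReal

/-- If `n` is quasinilpotent and `x` commutes with `n`, then `x * n` is quasinilpotent. -/
lemma aux_sr_mul_zero {B : Type*} [NormedRing B] [NormedAlgebra ℂ B] [CompleteSpace B]
    (x n : B) (hc : Commute x n) (hn : spectralRadius ℂ n = 0) :
    spectralRadius ℂ (x * n) = 0 := by
  have key := spectrum.pow_nnnorm_pow_one_div_tendsto_nhds_spectralRadius (x * n)
  have keyn := spectrum.pow_nnnorm_pow_one_div_tendsto_nhds_spectralRadius n
  rw [hn] at keyn
  have htend : Tendsto (fun k : ℕ => (‖x‖₊ : ℝ≥0∞) * (‖n ^ k‖₊ : ℝ≥0∞) ^ (1/(k:ℝ)))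
      atTop (𝓝 0) := by
    have := ENNReal.Tendsto.const_mul keyn (Or.inr (ENNReal.coe_ne_top (r := ‖x‖₊)))
    simpa using this
  have hle : ∀ᶠ k : ℕ in atTop,
      (‖(x*n) ^ k‖₊ : ℝ≥0∞) ^ (1/(k:ℝ)) ≤ (‖x‖₊ : ℝ≥0∞) * (‖n ^ k‖₊ : ℝ≥0∞) ^ (1/(k:ℝ)) := by
    filter_upwards [eventually_ge_atTop 1] with k hk
    have hkpos : 0 < k := hk
    have h2 : ‖(x*n)^k‖₊ ≤ ‖x‖₊^k * ‖n^k‖₊ := by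
      rw [hc.mul_pow k]
      calc ‖x^k * n^k‖₊ ≤ ‖x^k‖₊ * ‖n^k‖₊ := nnnorm_mul_le _ _
        _ ≤ ‖x‖₊^k * ‖n^k‖₊ := by gcongr; exact nnnorm_pow_le' x hkpos
    have h3 : ((‖(x*n)^k‖₊ : ℝ≥0∞)) ^ (1/(k:ℝ)) ≤
        ((‖x‖₊^k * ‖n^k‖₊ : ℝ≥0) : ℝ≥0∞) ^ (1/(k:ℝ)) :=
      ENNReal.rpow_le_rpow (by exact_mod_cast h2) (by positivity)
    refine h3.trans ?_
    rw [ENNReal.coe_mul, ENNReal.mul_rpow_of_nonneg _ _ (by positivity), ENNReal.coe_pow,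
      ← ENNReal.rpow_natCast (‖x‖₊ : ℝ≥0∞) k, ← ENNReal.rpow_mul]
    have hk1 : (k:ℝ) * (1/(k:ℝ)) = 1 :=
      mul_one_div_cancel (by exact_mod_cast hkpos.ne')
    rw [hk1, ENNReal.rpow_one]
  have := le_of_tendsto_of_tendsto key htend hle
  simpa using this

/-- sufficient condition (via an idempotent decomposition relative to `T`)
for `T a` to be Koliha-Drazin invertible but not invertible. -/
theorem kolihaDrazin_of_idempotent_decomposition
    {A B : Type*} [NormedRing A] [NormedAlgebra ℂ A] [CompleteSpace A]
    [NormedRing B] [NormedAlgebra ℂ B] [CompleteSpace B] [Nontrivial B]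
    (T : A →ₐ[ℂ] B) (a : A) (p : A) (hp : p * p = p) (hq0 : T p ≠ 0)
    (h1 : T (p * a * (1 - p)) = 0)
    (h2 : T ((1 - p) * a * p) = 0)
    (h3 : spectrum ℂ (T (p * a * p)) = {0})
    (h4 : ∃ z : B, z = (1 - T p) * z * (1 - T p) ∧
      T ((1 - p) * a * (1 - p)) * z = 1 - T p ∧
      z * T ((1 - p) * a * (1 - p)) = 1 - T p) :
    (∃ c : B, T a * c = c * T a ∧ c * (T a) * c = c ∧
      spectrum ℂ (T a * c * T a - T a) = {0}) ∧
    ¬ IsUnit (T a) := by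
  set q := T p with hqdef
  set b := T a with hbdef
  have hq : q * q = q := by rw [hqdef, ← map_mul, hp]
  have h1' : q * b * (1 - q) = 0 := by
    have := h1; rwa [map_mul, map_mul, map_sub, map_one] at this
  have h2' : (1 - q) * b * q = 0 := by
    have := h2; rwa [map_mul, map_mul, map_sub, map_one] at this
  have hpap : T (p * a * p) = q * b * q := by rw [map_mul, map_mul]
  have hm : T ((1 - p) * a * (1 - p)) = (1 - q) * b * (1 - q) := by
    rw [map_mul, map_mul, map_sub, map_one]
  have hq1 : (1 - q) * (1 - q) = 1 - q := by
    rw [sub_mul, one_mul, mul_sub, mul_one, hq, sub_self, sub_zero]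
  -- block-diagonal relations
  have hqb : q * b = q * b * q := by
    have e : q * b * (1 - q) = q * b - q * b * q := by noncomm_ring
    rw [e] at h1'
    exact sub_eq_zero.mp h1'
  have hbq : b * q = q * b * q := by
    have e : (1 - q) * b * q = b * q - q * b * q := by noncomm_ring
    rw [e] at h2'
    exact sub_eq_zero.mp h2'
  have hcomm : q * b = b * q := by rw [hqb, hbq]
  obtain ⟨z, hz, hz1, hz2⟩ := h4
  rw [hm] at hz1 hz2
  have hz' : (1 - q) * z = z := by
    conv_lhs => rw [hz]
    rw [← mul_assoc, ← mul_assoc, hq1, ← hz]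
  have hz'' : z * (1 - q) = z := by
    conv_lhs => rw [hz]
    rw [mul_assoc, hq1, ← hz]
  -- b * z = 1 - q
  have hbz : b * z = 1 - q := by
    have e1 : b * ((1 - q) * z) = (1 - q) * b * (1 - q) * z := by
      have : b * ((1 - q) * z) - (1 - q) * b * (1 - q) * z = q * b * (1 - q) * z := by
        noncomm_ring
      have h0 : q * b * (1 - q) * z = 0 := by rw [h1', zero_mul]
      rw [h0] at this
      exact sub_eq_zero.mp this
    calc b * z = b * ((1 - q) * z) := by rw [hz']
      _ = (1 - q) * b * (1 - q) * z := e1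
      _ = 1 - q := hz1
  -- z * b = 1 - q
  have hzb : z * b = 1 - q := by
    have e2 : (z * (1 - q)) * b = z * ((1 - q) * b * (1 - q)) := by
      have : (z * (1 - q)) * b - z * ((1 - q) * b * (1 - q)) = z * ((1 - q) * b * q) := by
        noncomm_ring
      have h0 : z * ((1 - q) * b * q) = 0 := by rw [h2', mul_zero]
      rw [h0] at this
      exact sub_eq_zero.mp this
    calc z * b = (z * (1 - q)) * b := by rw [hz'']
      _ = z * ((1 - q) * b * (1 - q)) := e2
      _ = 1 - q := hz2
  have hcomm' : b * z = z * b := by rw [hbz, hzb]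
  -- z * b * z = z
  have hzbz : z * b * z = z := by rw [hzb, hz']
  -- b * z * b - b = -(q * b * q)
  have hbzb : b * z * b - b = -(q * b * q) := by
    rw [hbz]
    have : (1 - q) * b - b = -(q * b) := by noncomm_ring
    rw [this]
    exact congrArg Neg.neg hqb
  have hspec : spectrum ℂ (b * z * b - b) = {0} := by
    rw [hbzb, ← hpap, ← spectrum.neg_eq, h3]
    ext x
    simp [Set.mem_neg, neg_eq_zero, eq_comm]
  -- not a unit
  have hnotunit : ¬ IsUnit b := by
    rintro ⟨u, hu⟩
    set x : B := ↑u⁻¹ with hxdef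
    have hub : (↑u : B) = b := hu
    have hxb : x * b = 1 := by rw [← hub]; exact u.inv_mul
    have hbx : b * x = 1 := by rw [← hub]; exact u.mul_inv
    -- x commutes with q
    have hxq : x * q = q * x := by
      calc x * q = x * q * (b * x) := by rw [hbx, mul_one]
        _ = x * (q * b) * x := by noncomm_ring
        _ = x * (b * q) * x := by rw [hcomm]
        _ = (x * b) * (q * x) := by noncomm_ring
        _ = q * x := by rw [hxb, one_mul]
    have hn : spectralRadius ℂ (b * q) = 0 := by
      have : spectrum ℂ (b * q) = {0} := by rw [hbq, ← hpap, h3]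
      simp [spectralRadius, this]
    have hcxn : Commute x (b * q) := by
      show x * (b * q) = (b * q) * x
      calc x * (b * q) = (x * b) * q := by rw [mul_assoc]
        _ = q := by rw [hxb, one_mul]
        _ = (b * x) * q := by rw [hbx, one_mul]
        _ = b * (x * q) := by rw [mul_assoc]
        _ = b * (q * x) := by rw [hxq]
        _ = (b * q) * x := by rw [mul_assoc]
    have hq_sr : spectralRadius ℂ (x * (b * q)) = 0 := aux_sr_mul_zero _ _ hcxn hn
    have hxbq : x * (b * q) = q := by
      rw [← mul_assoc, hxb, one_mul]
    rw [hxbq] at hq_sr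
    -- 1 ∉ spectrum q
    have h1q : (1 : ℂ) ∉ spectrum ℂ q := by
      intro hmem
      have hle : (‖(1:ℂ)‖₊ : ℝ≥0∞) ≤ spectralRadius ℂ q :=
        le_iSup₂ (f := fun (k : ℂ) (_ : k ∈ spectrum ℂ q) => (‖k‖₊ : ℝ≥0∞)) 1 hmem
      rw [hq_sr] at hle
      simp at hle
    have hunit : IsUnit ((1 : B) - q) := by
      have := spectrum.notMem_iff.mp h1q
      rwa [map_one] at this
    have hzero : (1 - q) * q = (1 - q) * 0 := by
      rw [mul_zero, sub_mul, one_mul, hq, sub_self]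
    exact hq0 (hunit.mul_left_cancel hzero)
  exact ⟨⟨z, hcomm', hzbz, hspec⟩, hnotunit⟩
end

section
/- Let A be a complex unital Banach algebra and a ∈ A. Then λ ∈ ℂ is an isolated point of the spectrum of a if and only if a - λ·1 is Koliha-Drazin invertible but not invertible. -/
open Metric Complex Set Real

set_option linter.unusedSectionVars false
set_option maxHeartbeats 1000000
section Fwd
variable {A : Type*} [NormedRing A] [NormedAlgebra ℂ A] [CompleteSpace A]

lemma clm_circleIntegral (L : A →L[ℂ] A) {f : ℂ → A} {c : ℂ} {r : ℝ}
    (hf : CircleIntegrable f c r) :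
    L (∮ z in C(c, r), f z) = ∮ z in C(c, r), L (f z) := by
  rw [circleIntegral, circleIntegral, ← L.intervalIntegral_comp_comm hf.out]
  congr 1; ext θ; rw [L.map_smul]

lemma mul_circleIntegral (y : A) {f : ℂ → A} {c : ℂ} {r : ℝ}
    (hf : CircleIntegrable f c r) :
    y * (∮ z in C(c, r), f z) = ∮ z in C(c, r), y * f z := by
  simpa using clm_circleIntegral (ContinuousLinearMap.mul ℂ A y) hf

lemma circleIntegral_mul (y : A) {f : ℂ → A} {c : ℂ} {r : ℝ}
    (hf : CircleIntegrable f c r) :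
    (∮ z in C(c, r), f z) * y = ∮ z in C(c, r), f z * y := by
  simpa using clm_circleIntegral ((ContinuousLinearMap.mul ℂ A).flip y) hf

lemma circleIntegral_add' {f g : ℂ → A} {c : ℂ} {r : ℝ}
    (hf : CircleIntegrable f c r) (hg : CircleIntegrable g c r) :
    (∮ z in C(c, r), (f z + g z)) = (∮ z in C(c, r), f z) + ∮ z in C(c, r), g z := by
  simp only [circleIntegral, smul_add]
  exact intervalIntegral.integral_add hf.out hg.out

lemma circleIntegral_neg' {E : Type*} [NormedAddCommGroup E] [NormedSpace ℂ E]
    (f : ℂ → E) (c : ℂ) (r : ℝ) :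
    (∮ z in C(c, r), (-(f z))) = -(∮ z in C(c, r), f z) := by
  simp only [circleIntegral, smul_neg]
  exact intervalIntegral.integral_neg

lemma KD_forward [Nontrivial A] {x : A} {R₀ : ℝ} (hR₀ : 0 < R₀)
    (hres : ∀ z : ℂ, z ≠ 0 → ‖z‖ ≤ R₀ → IsUnit (algebraMap ℂ A z - x)) :
    ∃ b : A, x * b = b * x ∧ b * x * b = b ∧ spectrum ℂ (x * b * x - x) = {0} := by
  set F : ℂ → A := resolvent x with hF
  -- basic pointwise facts
  have hFdef : ∀ z : ℂ, F z = Ring.inverse (algebraMap ℂ A z - x) := fun z => rfl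
  have hFl : ∀ {z : ℂ}, z ≠ 0 → ‖z‖ ≤ R₀ → (algebraMap ℂ A z - x) * F z = 1 := by
    intro z hz hn; rw [hFdef]; exact Ring.mul_inverse_cancel _ (hres z hz hn)
  have hFr : ∀ {z : ℂ}, z ≠ 0 → ‖z‖ ≤ R₀ → F z * (algebraMap ℂ A z - x) = 1 := by
    intro z hz hn; rw [hFdef]; exact Ring.inverse_mul_cancel _ (hres z hz hn)
  have hsph : ∀ {r : ℝ}, 0 < r → ∀ {z : ℂ}, z ∈ sphere (0:ℂ) r → (z ≠ 0 ∧ ‖z‖ = r) := by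
    intro r hr z hzs
    rw [mem_sphere_zero_iff_norm] at hzs
    exact ⟨by rintro rfl; simp at hzs; exact hr.ne' hzs.symm, hzs⟩
  have hdiff : ∀ {z : ℂ}, z ≠ 0 → ‖z‖ ≤ R₀ → DifferentiableAt ℂ F z := by
    intro z hz hn
    exact (spectrum.hasDerivAt_resolvent
      (spectrum.mem_resolventSet_iff.mpr (hres z hz hn))).differentiableAt
  have hcont : ∀ {r : ℝ}, 0 < r → r ≤ R₀ → ContinuousOn F (sphere (0:ℂ) r) := by
    intro r hr hrR z hzs
    obtain ⟨hz0, hzn⟩ := hsph hr hzs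
    exact (hdiff hz0 (hzn ▸ hrR)).continuousAt.continuousWithinAt
  have hInt : ∀ {r : ℝ}, 0 < r → r ≤ R₀ → CircleIntegrable F 0 r := by
    intro r hr hrR
    exact (hcont hr hrR).circleIntegrable hr.le
  -- radius independence
  have hPind : ∀ {r : ℝ}, 0 < r → r ≤ R₀ →
      (∮ z in C(0, r), F z) = ∮ z in C(0, R₀), F z := by
    intro r hr hrR
    refine (circleIntegral_eq_of_differentiable_on_annulus_off_countable hr hrR
      countable_empty ?_ ?_).symm
    · intro z hz
      obtain ⟨hz1, hz2⟩ := hz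
      rw [mem_closedBall_zero_iff] at hz1
      rw [mem_ball_zero_iff, not_lt] at hz2
      have hz0 : z ≠ 0 := by
        rintro rfl; simp at hz2; exact (hr.trans_le hz2).ne' rfl
      exact (hdiff hz0 hz1).continuousAt.continuousWithinAt
    · intro z hz
      obtain ⟨⟨hz1, hz2⟩, -⟩ := hz
      rw [mem_ball_zero_iff] at hz1
      rw [mem_closedBall_zero_iff, not_le] at hz2
      have hz0 : z ≠ 0 := by
        rintro rfl; simp at hz2; exact absurd hz2 (not_lt.mpr hr.le)
      exact hdiff hz0 hz1.le

  -- commutation with resolvent values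
  have hcommF : ∀ {z : ℂ}, z ≠ 0 → ‖z‖ ≤ R₀ → ∀ {y : A}, y * x = x * y → y * F z = F z * y := by
    intro z hz hn y hy
    have hu := hres z hz hn
    have h : Commute y (hu.unit : A) := by
      rw [hu.unit_spec]
      show y * (algebraMap ℂ A z - x) = (algebraMap ℂ A z - x) * y
      rw [mul_sub, sub_mul, hy, ← Algebra.commutes z y]
    have h2 := (h.units_inv_right).eq
    rw [hFdef, ← hu.unit_spec, Ring.inverse_unit]
    exact h2
  -- resolvent identity
  have hFmul : ∀ {z w : ℂ}, z ≠ 0 → ‖z‖ ≤ R₀ → w ≠ 0 → ‖w‖ ≤ R₀ → z ≠ w →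
      F w * F z = (z - w)⁻¹ • (F w - F z) := by
    intro z w hz hzn hw hwn hzw
    have e1 : F w - F z =
        F w * ((algebraMap ℂ A z - x) * F z) - (F w * (algebraMap ℂ A w - x)) * F z := by
      rw [hFl hz hzn, hFr hw hwn, mul_one, one_mul]
    have e : F w - F z = (z - w) • (F w * F z) := by
      calc F w - F z = F w * ((algebraMap ℂ A z - x) * F z)
            - (F w * (algebraMap ℂ A w - x)) * F z := e1
      _ = (F w * (algebraMap ℂ A z - algebraMap ℂ A w)) * F z := by noncomm_ring
      _ = (F w * (algebraMap ℂ A (z - w))) * F z := by rw [map_sub]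
      _ = ((z - w) • F w) * F z := by
            rw [← Algebra.commutes (z - w) (F w), ← Algebra.smul_def]
      _ = (z - w) • (F w * F z) := by rw [smul_mul_assoc]
    rw [e, smul_smul, inv_mul_cancel₀ (sub_ne_zero_of_ne hzw), one_smul]
  -- the Riesz projection
  set T : ℂ := (2 * π * I : ℂ) with hT
  have hTne : T ≠ 0 := two_pi_I_ne_zero
  set p : A := T⁻¹ • ∮ z in C(0, R₀), F z with hp
  have hr₁ : 0 < R₀/2 := by linarith
  have hr₁R : R₀/2 ≤ R₀ := by linarith
  have hr₁lt : R₀/2 < R₀ := by linarith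
  -- Cauchy transform
  set g : ℂ → A := fun z => T⁻¹ • ∮ w in C(0, R₀), (w - z)⁻¹ • F w with hg
  have hRnn : ((R₀.toNNReal : NNReal) : ℝ) = R₀ := Real.coe_toNNReal _ hR₀.le
  have hganal : HasFPowerSeriesOnBall
      (fun w => (2 * π * I : ℂ)⁻¹ • ∮ z in C(0, (R₀.toNNReal : ℝ)), (z - w)⁻¹ • F z)
      (cauchyPowerSeries F 0 R₀.toNNReal) 0 (R₀.toNNReal : ENNReal) :=
    hasFPowerSeriesOn_cauchy_integral (by rw [hRnn]; exact hInt hR₀ le_rfl)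
      (Real.toNNReal_pos.mpr hR₀)
  have hgdiff : ∀ z ∈ ball (0:ℂ) R₀, DifferentiableAt ℂ g z := by
    intro z hz
    have h1 : DifferentiableOn ℂ
        (fun w => (2 * π * I : ℂ)⁻¹ • ∮ z in C(0, (R₀.toNNReal : ℝ)), (z - w)⁻¹ • F z)
        (Metric.eball (0:ℂ) (R₀.toNNReal : ENNReal)) :=
      hganal.differentiableOn
    rw [Metric.emetric_ball_nnreal, hRnn] at h1
    have h2 : DifferentiableOn ℂ g (ball (0:ℂ) R₀) := by
      have hgeq : g = fun w => (2 * π * I : ℂ)⁻¹ • ∮ z in C(0, R₀), (z - w)⁻¹ • F z := by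
        funext w
        simp only [hg, hT]
      rw [hgeq]; exact h1
    exact h2.differentiableAt (Metric.isOpen_ball.mem_nhds hz)
  -- key pointwise identity on the inner circle
  have hpF : ∀ z ∈ sphere (0:ℂ) (R₀/2), p * F z = F z + -(g z) := by
    intro z hz
    obtain ⟨hz0, hzn⟩ := hsph hr₁ hz
    have hznR : ‖z‖ ≤ R₀ := by rw [hzn]; linarith
    have hzball : z ∈ ball (0:ℂ) R₀ := by rw [mem_ball_zero_iff, hzn]; linarith
    have hznez : ∀ w ∈ sphere (0:ℂ) R₀, w - z ≠ 0 := by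
      intro w hw
      obtain ⟨hw0, hwn⟩ := hsph hR₀ hw
      refine sub_ne_zero_of_ne fun h => ?_
      rw [h, hzn] at hwn; linarith
    have hcont2 : ContinuousOn (fun w => (w - z)⁻¹ • F w) (sphere (0:ℂ) R₀) :=
      (((continuousOn_id.sub continuousOn_const).inv₀ hznez)).smul (hcont hR₀ le_rfl)
    have I2 : CircleIntegrable (fun w => (w - z)⁻¹ • F w) 0 R₀ :=
      hcont2.circleIntegrable hR₀.le
    have I2' : CircleIntegrable (fun w => (z - w)⁻¹ • F w) 0 R₀ := by
      have : ContinuousOn (fun w => (z - w)⁻¹ • F w) (sphere (0:ℂ) R₀) :=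
        (((continuousOn_const.sub continuousOn_id).inv₀
          (fun w hw => by rw [← neg_sub]; exact neg_ne_zero.mpr (hznez w hw)))).smul
          (hcont hR₀ le_rfl)
      exact this.circleIntegrable hR₀.le
    have I3 : CircleIntegrable (fun w => (z - w)⁻¹ • F z) 0 R₀ := by
      have : ContinuousOn (fun w => (z - w)⁻¹ • F z) (sphere (0:ℂ) R₀) :=
        (((continuousOn_const.sub continuousOn_id).inv₀
          (fun w hw => by rw [← neg_sub]; exact neg_ne_zero.mpr (hznez w hw)))).smul
          continuousOn_const
      exact this.circleIntegrable hR₀.le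
    have hInv : (∮ w in C(0,R₀), (z - w)⁻¹) = -T := by
      calc (∮ w in C(0,R₀), (z - w)⁻¹) = ∮ w in C(0,R₀), -((w - z)⁻¹) :=
            circleIntegral.integral_congr hR₀.le (fun w _ => by rw [← neg_sub, inv_neg])
      _ = -(∮ w in C(0,R₀), (w - z)⁻¹) := circleIntegral_neg' _ _ _
      _ = -T := by rw [circleIntegral.integral_sub_inv_of_mem_ball hzball, hT]
    have hfirst : T⁻¹ • (∮ w in C(0,R₀), (z - w)⁻¹ • F w) = -(g z) := by
      have e : (∮ w in C(0,R₀), (z - w)⁻¹ • F w)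
          = ∮ w in C(0,R₀), -((w - z)⁻¹ • F w) :=
        circleIntegral.integral_congr hR₀.le
          (fun w _ => by rw [← neg_sub, inv_neg, neg_smul])
      rw [e, circleIntegral_neg', smul_neg, hg]
    calc p * F z = T⁻¹ • ((∮ w in C(0,R₀), F w) * F z) := by rw [hp, smul_mul_assoc]
    _ = T⁻¹ • (∮ w in C(0,R₀), F w * F z) := by
          rw [circleIntegral_mul (F z) (hInt hR₀ le_rfl)]
    _ = T⁻¹ • (∮ w in C(0,R₀), ((z - w)⁻¹ • F w - (z - w)⁻¹ • F z)) := by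
          congr 1
          refine circleIntegral.integral_congr hR₀.le fun w hw => ?_
          obtain ⟨hw0, hwn⟩ := hsph hR₀ hw
          have hzw : z ≠ w := fun h => by rw [← h, hzn] at hwn; linarith
          rw [hFmul hz0 hznR hw0 hwn.le hzw, smul_sub]
    _ = T⁻¹ • ((∮ w in C(0,R₀), (z - w)⁻¹ • F w) - (∮ w in C(0,R₀), (z - w)⁻¹ • F z)) := by
          rw [circleIntegral.integral_sub I2' I3]
    _ = T⁻¹ • (∮ w in C(0,R₀), (z - w)⁻¹ • F w) - T⁻¹ • ((∮ w in C(0,R₀), (z - w)⁻¹) • F z) := by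
          rw [smul_sub, circleIntegral.integral_smul_const]
    _ = -(g z) - T⁻¹ • ((-T) • F z) := by rw [hfirst, hInv]
    _ = F z + -(g z) := by
          rw [smul_smul, mul_neg, mul_comm, mul_inv_cancel₀ hTne]
          simp only [neg_smul, one_smul, sub_neg_eq_add]
          abel
  -- continuity of g near the inner circle
  have hgcont : ContinuousOn g (closedBall (0:ℂ) (R₀/2)) := by
    intro z hz
    rw [mem_closedBall_zero_iff] at hz
    exact (hgdiff z (by rw [mem_ball_zero_iff]; linarith)).continuousAt.continuousWithinAt
  have hgInt : CircleIntegrable (fun z => -(g z)) 0 (R₀/2) := by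
    refine (ContinuousOn.neg ?_).circleIntegrable hr₁.le
    exact hgcont.mono (sphere_subset_closedBall)
  have hgzero : (∮ z in C(0, R₀/2), -(g z)) = 0 := by
    rw [circleIntegral_neg', neg_eq_zero]
    refine Complex.circleIntegral_eq_zero_of_differentiable_on_off_countable hr₁.le
      countable_empty hgcont ?_
    intro z hz
    rw [Set.diff_empty, mem_ball_zero_iff] at hz
    exact hgdiff z (by rw [mem_ball_zero_iff]; linarith)
  -- idempotency
  have hpp : p * p = p := by
    calc p * p = T⁻¹ • (p * (∮ z in C(0, R₀), F z)) := by rw [hp, mul_smul_comm]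
    _ = T⁻¹ • (p * (∮ z in C(0, R₀/2), F z)) := by rw [hPind hr₁ hr₁R]
    _ = T⁻¹ • (∮ z in C(0, R₀/2), p * F z) := by rw [mul_circleIntegral p (hInt hr₁ hr₁R)]
    _ = T⁻¹ • (∮ z in C(0, R₀/2), (F z + -(g z))) := by
          rw [circleIntegral.integral_congr hr₁.le hpF]
    _ = T⁻¹ • ((∮ z in C(0, R₀/2), F z) + ∮ z in C(0, R₀/2), -(g z)) := by
          rw [circleIntegral_add' (hInt hr₁ hr₁R) hgInt]
    _ = T⁻¹ • (∮ z in C(0, R₀/2), F z) := by rw [hgzero, add_zero]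
    _ = p := by rw [hPind hr₁ hr₁R, hp]

  -- x * F z = z • F z - 1 and F z * x = z • F z - 1
  have hxFz : ∀ {z : ℂ}, z ≠ 0 → ‖z‖ ≤ R₀ → x * F z = z • F z - 1 := by
    intro z hz0 hzn
    have h2 : algebraMap ℂ A z * F z - x * F z = 1 := by
      rw [← sub_mul]; exact hFl hz0 hzn
    rw [← Algebra.smul_def] at h2
    rw [← h2]; abel
  have hFzx : ∀ {z : ℂ}, z ≠ 0 → ‖z‖ ≤ R₀ → F z * x = z • F z - 1 := by
    intro z hz0 hzn
    have h2 : F z * algebraMap ℂ A z - F z * x = 1 := by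
      rw [← mul_sub]; exact hFr hz0 hzn
    rw [← Algebra.commutes z (F z), ← Algebra.smul_def] at h2
    rw [← h2]; abel
  -- commutation of x and p
  have hxp : p * x = x * p := by
    rw [hp, smul_mul_assoc, mul_smul_comm]
    congr 1
    rw [circleIntegral_mul x (hInt hR₀ le_rfl), mul_circleIntegral x (hInt hR₀ le_rfl)]
    refine circleIntegral.integral_congr hR₀.le fun z hz => ?_
    obtain ⟨hz0, hzn⟩ := hsph hR₀ hz
    exact (hcommF hz0 hzn.le rfl).symm
  -- the element c
  have hIntzF : CircleIntegrable (fun z => z⁻¹ • F z) 0 R₀ := by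
    refine (ContinuousOn.smul ?_ (hcont hR₀ le_rfl)).circleIntegrable hR₀.le
    exact continuousOn_id.inv₀ (fun z hz => (hsph hR₀ hz).1)
  have hIntone : CircleIntegrable (fun z => z⁻¹ • (1:A)) 0 R₀ := by
    refine (ContinuousOn.smul ?_ continuousOn_const).circleIntegrable hR₀.le
    exact continuousOn_id.inv₀ (fun z hz => (hsph hR₀ hz).1)
  set c : A := T⁻¹ • ∮ z in C(0, R₀), z⁻¹ • F z with hc
  have hzint : (∮ z in C(0, R₀), z⁻¹ • (1:A)) = T • 1 := by
    rw [circleIntegral.integral_smul_const]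
    congr 1
    calc (∮ z in C(0, R₀), z⁻¹) = ∮ z in C(0, R₀), (z - 0)⁻¹ := by simp
    _ = T := circleIntegral.integral_sub_center_inv 0 hR₀.ne'
  have hxc : x * c = p - 1 := by
    rw [hc, mul_smul_comm, mul_circleIntegral x hIntzF]
    have e : EqOn (fun z => x * (z⁻¹ • F z)) (fun z : ℂ => F z - z⁻¹ • (1:A))
        (sphere (0:ℂ) R₀) := by
      intro z hz
      obtain ⟨hz0, hzn⟩ := hsph hR₀ hz
      show x * (z⁻¹ • F z) = F z - z⁻¹ • 1
      rw [mul_smul_comm, hxFz hz0 hzn.le, smul_sub, smul_smul,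
        inv_mul_cancel₀ hz0, one_smul]
    rw [circleIntegral.integral_congr hR₀.le e,
      circleIntegral.integral_sub (hInt hR₀ le_rfl) hIntone, hzint, smul_sub, ← hp,
      smul_smul, inv_mul_cancel₀ hTne, one_smul]
  have hcx : c * x = p - 1 := by
    rw [hc, smul_mul_assoc, circleIntegral_mul x hIntzF]
    have e : EqOn (fun z => (z⁻¹ • F z) * x) (fun z : ℂ => F z - z⁻¹ • (1:A))
        (sphere (0:ℂ) R₀) := by
      intro z hz
      obtain ⟨hz0, hzn⟩ := hsph hR₀ hz
      show (z⁻¹ • F z) * x = F z - z⁻¹ • 1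
      rw [smul_mul_assoc, hFzx hz0 hzn.le, smul_sub, smul_smul,
        inv_mul_cancel₀ hz0, one_smul]
    rw [circleIntegral.integral_congr hR₀.le e,
      circleIntegral.integral_sub (hInt hR₀ le_rfl) hIntone, hzint, smul_sub, ← hp,
      smul_smul, inv_mul_cancel₀ hTne, one_smul]
  have hpc : p * c = c * p := by
    have e1 : p * c = T⁻¹ • (p * (∮ z in C(0, R₀), z⁻¹ • F z)) := by
      rw [hc, mul_smul_comm]
    have e2 : c * p = T⁻¹ • ((∮ z in C(0, R₀), z⁻¹ • F z) * p) := by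
      rw [hc, smul_mul_assoc]
    rw [e1, e2]
    congr 1
    rw [mul_circleIntegral p hIntzF, circleIntegral_mul p hIntzF]
    refine circleIntegral.integral_congr hR₀.le fun z hz => ?_
    obtain ⟨hz0, hzn⟩ := hsph hR₀ hz
    have hcp : p * F z = F z * p := hcommF hz0 hzn.le hxp
    show p * (z⁻¹ • F z) = (z⁻¹ • F z) * p
    rw [mul_smul_comm, hcp, smul_mul_assoc]
  -- the generalized inverse b
  set b : A := c * p - c with hb
  have hxb : x * b = 1 - p := by
    calc x * b = (x * c) * p - x * c := by rw [hb, mul_sub, mul_assoc]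
    _ = (p - 1) * p - (p - 1) := by rw [hxc]
    _ = p * p - p - (p - 1) := by noncomm_ring
    _ = 1 - p := by rw [hpp]; abel
  have hbx : b * x = 1 - p := by
    have e : (c * p) * x = (c * x) * p := by
      rw [mul_assoc, hxp, ← mul_assoc]
    calc b * x = (c * x) * p - c * x := by rw [hb, sub_mul, e]
    _ = (p - 1) * p - (p - 1) := by rw [hcx]
    _ = p * p - p - (p - 1) := by noncomm_ring
    _ = 1 - p := by rw [hpp]; abel
  have h1 : x * b = b * x := by rw [hxb, hbx]
  have hpb : p * b = 0 := by
    calc p * b = (p * c) * p - p * c := by rw [hb, mul_sub, mul_assoc]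
    _ = (c * p) * p - c * p := by rw [hpc]
    _ = c * (p * p) - c * p := by rw [mul_assoc]
    _ = 0 := by rw [hpp, sub_self]
  have h2 : b * x * b = b := by
    calc b * x * b = (1 - p) * b := by rw [hbx]
    _ = b - p * b := by rw [sub_mul, one_mul]
    _ = b := by rw [hpb, sub_zero]
  have hq : x * b * x - x = -(x * p) := by
    calc x * b * x - x = (1 - p) * x - x := by rw [hxb]
    _ = -(p * x) := by noncomm_ring
    _ = -(x * p) := by rw [hxp]
  -- power integrals
  have hIntzn : ∀ (n : ℕ) {r : ℝ}, 0 < r → r ≤ R₀ →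
      CircleIntegrable (fun z => z^n • F z) 0 r := by
    intro n r hr hrR
    exact (((continuous_pow n).continuousOn).smul (hcont hr hrR)).circleIntegrable hr.le
  have hzn0 : ∀ (n : ℕ) {r : ℝ}, 0 < r → (∮ z in C(0, r), (z^n : ℂ)) = 0 := by
    intro n r hr
    refine circleIntegral.integral_eq_zero_of_hasDerivWithinAt (f := fun z => ((n:ℂ)+1)⁻¹ * z^(n+1)) hr.le ?_
    intro z hz
    have h := (hasDerivAt_pow (n+1) z).const_mul (((n:ℂ)+1)⁻¹)
    have hne : ((n:ℂ)+1) ≠ 0 := by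
      exact_mod_cast (Nat.cast_ne_zero (R := ℂ)).mpr (Nat.succ_ne_zero n)
    have h9 : ((n+1:ℕ):ℂ) = (n:ℂ)+1 := by push_cast; ring
    have e : ((n:ℂ)+1)⁻¹ * (((n:ℕ)+1 : ℕ) * z^(n+1-1)) = z^n := by
      rw [h9, ← mul_assoc, inv_mul_cancel₀ hne, one_mul]
      norm_num
    rw [e] at h
    exact h.hasDerivWithinAt
  have hxnp : ∀ (n : ℕ) (r : ℝ), 0 < r → r ≤ R₀ →
      x^n * p = T⁻¹ • ∮ z in C(0, r), z^n • F z := by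
    intro n
    induction n with
    | zero =>
      intro r hr hrR
      simp only [pow_zero, one_mul, one_smul]
      rw [hp, hPind hr hrR]
    | succ n ih =>
      intro r hr hrR
      have e1 : x^(n+1) * p = x * (x^n * p) := by rw [pow_succ']; rw [mul_assoc]
      rw [e1, ih r hr hrR, mul_smul_comm, mul_circleIntegral x (hIntzn n hr hrR)]
      congr 1
      have e2 : EqOn (fun z => x * (z^n • F z))
          (fun z : ℂ => z^(n+1) • F z - z^n • (1:A)) (sphere (0:ℂ) r) := by
        intro z hz
        obtain ⟨hz0, hzn⟩ := hsph hr hz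
        have hznR : ‖z‖ ≤ R₀ := by rw [hzn]; exact hrR
        show x * (z^n • F z) = z^(n+1) • F z - z^n • 1
        calc x * (z^n • F z) = z^n • (x * F z) := by rw [mul_smul_comm]
        _ = z^n • (z • F z) - z^n • 1 := by rw [hxFz hz0 hznR, smul_sub]
        _ = z^(n+1) • F z - z^n • 1 := by rw [smul_smul, ← pow_succ]
      have hIntn1 : CircleIntegrable (fun z => z^n • (1:A)) 0 r :=
        (((continuous_pow n).continuousOn).smul continuousOn_const).circleIntegrable hr.le
      rw [circleIntegral.integral_congr hr.le e2,
        circleIntegral.integral_sub (hIntzn (n+1) hr hrR) hIntn1,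
        circleIntegral.integral_smul_const, hzn0 n hr, zero_smul, sub_zero]
  -- spectrum of x*p is {0}
  have hσsub : spectrum ℂ (x * p) ⊆ {0} := by
    intro μ hμmem
    rw [Set.mem_singleton_iff]
    by_contra hμ0
    have hμn : 0 < ‖μ‖ := norm_pos_iff.mpr hμ0
    set r : ℝ := min R₀ (‖μ‖/2) with hr
    have hr0 : 0 < r := lt_min hR₀ (by linarith)
    have hrR : r ≤ R₀ := min_le_left _ _
    have hrμ : r ≤ ‖μ‖/2 := min_le_right _ _
    obtain ⟨M₀, hM₀⟩ := (isCompact_sphere (0:ℂ) r).exists_bound_of_continuousOn (hcont hr0 hrR)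
    set M := max M₀ 0 with hM
    have hMn : (0:ℝ) ≤ M := le_max_right _ _
    have hMb : ∀ z ∈ sphere (0:ℂ) r, ‖F z‖ ≤ M := fun z hz => (hM₀ z hz).trans (le_max_left _ _)
    have hTnorm : ‖T⁻¹‖ = (2 * π)⁻¹ := by
      rw [norm_inv]
      congr 1
      rw [hT]
      rw [norm_mul, norm_mul, Complex.norm_I, mul_one]
      norm_num
      exact Real.pi_nonneg
    have hbound : ∀ n : ℕ, ‖x^n * p‖ ≤ r^(n+1) * M := by
      intro n
      rw [hxnp n r hr0 hrR, norm_smul, hTnorm]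
      have hb2 : ‖∮ z in C(0, r), z^n • F z‖ ≤ 2 * π * r * (r^n * M) := by
        refine circleIntegral.norm_integral_le_of_norm_le_const hr0.le ?_
        intro z hz
        obtain ⟨hz0, hzn⟩ := hsph hr0 hz
        rw [norm_smul, norm_pow, hzn]
        exact mul_le_mul_of_nonneg_left (hMb z hz) (pow_nonneg hr0.le n)
      calc (2*π)⁻¹ * ‖∮ z in C(0, r), z^n • F z‖ ≤ (2*π)⁻¹ * (2 * π * r * (r^n * M)) := by
            exact mul_le_mul_of_nonneg_left hb2 (by positivity)
      _ = r^(n+1) * M := by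
            have hπ : (0:ℝ) < π := Real.pi_pos
            field_simp
            ring
    have hpow : ∀ n : ℕ, (x * p)^(n+1) = x^(n+1) * p := by
      intro n
      induction n with
      | zero => rw [pow_one, pow_one]
      | succ n ih =>
        calc (x*p)^(n+1+1) = (x*p)^(n+1) * (x*p) := pow_succ _ _
        _ = (x^(n+1) * p) * (x * p) := by rw [ih]
        _ = x^(n+1) * ((p * x) * p) := by rw [mul_assoc, ← mul_assoc p x p]
        _ = x^(n+1) * (x * (p * p)) := by rw [hxp, mul_assoc]
        _ = (x^(n+1) * x) * p := by rw [hpp, ← mul_assoc]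
        _ = x^(n+1+1) * p := by rw [← pow_succ]
    set y : A := μ⁻¹ • (x * p) with hy
    have hrμ2 : r / ‖μ‖ ≤ 1/2 := by
      rw [div_le_div_iff₀ hμn (by norm_num : (0:ℝ) < 2)]
      linarith
    have hynorm : ∀ n : ℕ, ‖y^(n+1)‖ ≤ (1/2)^(n+1) * (r * M) := by
      intro n
      rw [hy, smul_pow, norm_smul, hpow n, norm_pow, norm_inv]
      have h3 : ‖x^(n+1) * p‖ ≤ r^(n+2) * M := hbound (n+1)
      calc ‖μ‖⁻¹^(n+1) * ‖x^(n+1)*p‖ ≤ ‖μ‖⁻¹^(n+1) * (r^(n+2)*M) := by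
            exact mul_le_mul_of_nonneg_left h3 (by positivity)
      _ = (r/‖μ‖)^(n+1) * (r * M) := by
            rw [div_pow]
            ring
      _ ≤ (1/2)^(n+1) * (r * M) := by
            refine mul_le_mul_of_nonneg_right ?_ (mul_nonneg hr0.le hMn)
            exact pow_le_pow_left₀ (by positivity) hrμ2 (n+1)
    obtain ⟨k, hk⟩ := exists_pow_lt_of_lt_one
      (show (0:ℝ) < (1 + r*M)⁻¹ by positivity) (by norm_num : (1/2:ℝ) < 1)
    have hrM : (0:ℝ) ≤ r * M := mul_nonneg hr0.le hMn
    have hyk : ‖y^(k+1)‖ < 1 := by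
      have h3 := hynorm k
      have h4 : (1/2:ℝ)^(k+1) ≤ (1/2)^k :=
        pow_le_pow_of_le_one (by norm_num) (by norm_num) (Nat.le_succ k)
      have h6 : (1/2:ℝ)^k * (1 + r*M) < (1 + r*M)⁻¹ * (1 + r*M) :=
        mul_lt_mul_of_pos_right hk (by positivity)
      have h7 : ((1:ℝ) + r*M)⁻¹ * (1 + r*M) = 1 := inv_mul_cancel₀ (by positivity)
      have h5 : (1/2:ℝ)^k * (r*M) ≤ (1/2)^k * (1 + r*M) :=
        mul_le_mul_of_nonneg_left (by linarith) (by positivity)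
      have h8 : (1/2:ℝ)^(k+1) * (r*M) ≤ (1/2)^k * (r*M) :=
        mul_le_mul_of_nonneg_right h4 hrM
      have h6' : (1/2:ℝ)^k * (1 + r*M) < 1 := by rw [h7] at h6; exact h6
      calc ‖y^(k+1)‖ ≤ (1/2)^(k+1) * (r*M) := h3
      _ ≤ (1/2)^k * (r*M) := h8
      _ ≤ (1/2)^k * (1 + r*M) := h5
      _ < 1 := h6'
    have hgeom : (∑ i ∈ Finset.range (k+1), y^i) * (1 - y) = 1 - y^(k+1) := by
      have h := geom_sum_mul y (k+1)
      calc (∑ i ∈ Finset.range (k+1), y^i) * (1 - y)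
          = -((∑ i ∈ Finset.range (k+1), y^i) * (y - 1)) := by noncomm_ring
      _ = -(y^(k+1) - 1) := by rw [h]
      _ = 1 - y^(k+1) := by abel
    have hWunit : IsUnit ((∑ i ∈ Finset.range (k+1), y^i) * (1 - y)) := by
      rw [hgeom]
      exact (Units.oneSub _ hyk).isUnit
    have hcommS : Commute (∑ i ∈ Finset.range (k+1), y^i) (1 - y) := by
      refine Commute.sum_left _ _ _ fun i _ => ?_
      exact (Commute.one_right _).sub_right ((Commute.refl y).pow_left i)
    have hy1 : IsUnit (1 - y) := (hcommS.isUnit_mul_iff.mp hWunit).2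
    have hμxp : algebraMap ℂ A μ - x * p = μ • (1 - y) := by
      rw [hy, smul_sub, smul_smul, mul_inv_cancel₀ hμ0, one_smul,
        Algebra.algebraMap_eq_smul_one]
    have hfin : IsUnit (algebraMap ℂ A μ - x * p) := by
      rw [hμxp, Algebra.smul_def]
      exact ((isUnit_iff_ne_zero.mpr hμ0).map (algebraMap ℂ A)).mul hy1
    exact (spectrum.mem_iff.mp hμmem) hfin
  have hσ : spectrum ℂ (x * p) = {0} := by
    refine Set.Subset.antisymm hσsub ?_
    obtain ⟨ν, hν⟩ := spectrum.nonempty (x * p)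
    have hν0 := hσsub hν
    rw [Set.mem_singleton_iff] at hν0
    rw [← hν0]
    exact Set.singleton_subset_iff.mpr hν
  refine ⟨b, h1, h2, ?_⟩
  rw [hq, ← spectrum.neg_eq, hσ, Set.neg_singleton, neg_zero]

variable {A : Type*} [NormedRing A] [NormedAlgebra ℂ A] [CompleteSpace A]

lemma KD_unit_aux {x b p : A} {μ : ℂ}
    (hpp : p * p = p) (hpx : p * x = x * p)
    (hxb : x * b = 1 - p) (hbx : b * x = 1 - p)
    (hpb : p * b = 0)
    (hU : IsUnit (algebraMap ℂ A μ - x * p))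
    (hVnorm : ‖μ • b‖ < 1) : IsUnit (algebraMap ℂ A μ - x) := by
  set M : A := algebraMap ℂ A μ with hM
  have hMy : ∀ y : A, M * y = y * M := fun y => Algebra.commutes μ y
  have hMb : M * b = μ • b := by rw [hM, ← Algebra.smul_def]
  set V : Aˣ := Units.oneSub (μ • b) hVnorm with hV
  have hVval : (V : A) = 1 - μ • b := rfl
  set w : A := ↑V⁻¹ with hw
  have hVw : (1 - μ • b) * w = 1 := by rw [← hVval, hw]; exact V.mul_inv
  set u : A := ↑hU.unit⁻¹ with hu
  have hUu : (M - x * p) * u = 1 := hU.mul_val_inv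
  have hpxp : p * (x * p) = x * p := by rw [← mul_assoc, hpx, mul_assoc, hpp]
  have hxpp : (x * p) * p = x * p := by rw [mul_assoc, hpp]
  have hxw : x * w = w * x := by
    have h : Commute x (V : A) := by
      rw [hVval]
      show x * (1 - μ • b) = (1 - μ • b) * x
      rw [mul_sub, sub_mul, mul_one, one_mul, mul_smul_comm, smul_mul_assoc, hxb, hbx]
    exact (h.units_inv_right).eq
  have hpu : p * u = u * p := by
    have h : Commute p ((hU.unit : A)) := by
      rw [hU.unit_spec]
      show p * (M - x * p) = (M - x * p) * p
      rw [mul_sub, sub_mul, hMy p, hpxp, hxpp]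
    exact (h.units_inv_right).eq
  have hxu : x * u = u * x := by
    have h : Commute x ((hU.unit : A)) := by
      rw [hU.unit_spec]
      show x * (M - x * p) = (M - x * p) * x
      rw [mul_sub, sub_mul, hMy x, mul_assoc x p x, hpx, ← mul_assoc]
    exact (h.units_inv_right).eq
  have hMu : M * u = u * M := by
    have h : Commute M ((hU.unit : A)) := by
      rw [hU.unit_spec]; exact hMy _
    exact (h.units_inv_right).eq
  have hpw : p * w = p := by
    have h5 : p * (1 - μ • b) = p := by
      rw [mul_sub, mul_one, mul_smul_comm, hpb, smul_zero, sub_zero]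
    calc p * w = p * (1 - μ • b) * w := by rw [h5]
    _ = p * ((1 - μ • b) * w) := by rw [mul_assoc]
    _ = p := by rw [hVw, mul_one]
  have claimA : (μ • b - (1 - p)) * w = p - 1 := by
    have e : μ • b - (1 - p) = p - (1 - μ • b) := by abel
    rw [e, sub_mul, hpw, hVw]
  set d : A := u * p - b * w with hd
  have hMxup : (M - x) * (u * p) = p := by
    have e1 : (M - x) * (u * p) = ((M - x * p) * u) * p + ((x * p - x) * (u * p)) := by
      noncomm_ring
    have e2 : (x * p - x) * (u * p) = 0 := by
      calc (x * p - x) * (u * p) = (x * p - x) * (p * u) := by rw [hpu]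
      _ = ((x * p - x) * p) * u := by rw [mul_assoc]
      _ = ((x * p) * p - x * p) * u := by rw [sub_mul]
      _ = 0 := by rw [hxpp, sub_self, zero_mul]
    rw [e1, e2, hUu, one_mul, add_zero]
  have key1 : (M - x) * d = 1 := by
    have h1 : (M - x) * (b * w) = p - 1 := by
      calc (M - x) * (b * w) = ((M * b) - (x * b)) * w := by noncomm_ring
      _ = (μ • b - (1 - p)) * w := by rw [hMb, hxb]
      _ = p - 1 := claimA
    calc (M - x) * d = (M - x) * (u * p) - (M - x) * (b * w) := by rw [hd, mul_sub]
    _ = p - (p - 1) := by rw [h1, hMxup]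
    _ = 1 := by abel
  have key2 : d * (M - x) = 1 := by
    have h1 : (b * w) * (M - x) = p - 1 := by
      calc (b * w) * (M - x) = (b * w) * M - b * (w * x) := by noncomm_ring
      _ = M * (b * w) - b * (x * w) := by rw [hMy, hxw]
      _ = ((M * b) - (b * x)) * w := by noncomm_ring
      _ = (μ • b - (1 - p)) * w := by rw [hMb, hbx]
      _ = p - 1 := claimA
    have h2 : (u * p) * (M - x) = (M - x) * (u * p) := by
      calc (u * p) * (M - x) = u * (p * M) - u * (p * x) := by noncomm_ring
      _ = u * (M * p) - u * (x * p) := by rw [hMy, hpx]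
      _ = (u * M) * p - (u * x) * p := by noncomm_ring
      _ = (M * u) * p - (x * u) * p := by rw [hMu, hxu]
      _ = (M - x) * (u * p) := by noncomm_ring
    calc d * (M - x) = (u * p) * (M - x) - (b * w) * (M - x) := by rw [hd, sub_mul]
    _ = p - (p - 1) := by rw [h1, h2, hMxup]
    _ = 1 := by abel
  exact ⟨⟨M - x, d, key1, key2⟩, rfl⟩

lemma KD_backward {x b : A} (h1 : x * b = b * x) (h2 : b * x * b = b)
    (h3 : spectrum ℂ (x * b * x - x) = {0}) {μ : ℂ} (hμ : μ ≠ 0)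
    (hsmall : ‖μ‖ * (1 + ‖b‖) < 1) : IsUnit (algebraMap ℂ A μ - x) := by
  have hss : (x * b) * (x * b) = x * b := by
    calc (x * b) * (x * b) = x * (b * x * b) := by noncomm_ring
    _ = x * b := by rw [h2]
  have hpp : (1 - x * b) * (1 - x * b) = 1 - x * b := by
    have e : (1 - x * b) * (1 - x * b) = 1 - x * b - x * b + (x * b) * (x * b) := by
      noncomm_ring
    rw [e, hss]; abel
  have hsx : (x * b) * x = x * (x * b) := by
    rw [mul_assoc, ← h1, ← mul_assoc, mul_assoc]
  have hpx : (1 - x * b) * x = x * (1 - x * b) := by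
    rw [sub_mul, mul_sub, one_mul, mul_one, hsx]
  have hxb' : x * b = 1 - (1 - x * b) := by abel
  have hbx' : b * x = 1 - (1 - x * b) := by rw [← h1]; abel
  have hsb : (x * b) * b = b := by rw [h1, h2]
  have hpb : (1 - x * b) * b = 0 := by rw [sub_mul, one_mul, hsb, sub_self]
  have hq : x * (1 - x * b) = -(x * b * x - x) := by
    have e : x * (1 - x * b) = -(x * (x * b) - x) := by noncomm_ring
    rw [e, hsx]
  have hxp_spec : spectrum ℂ (x * (1 - x * b)) = {0} := by
    rw [hq, ← spectrum.neg_eq, h3, Set.neg_singleton, neg_zero]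
  have hU : IsUnit (algebraMap ℂ A μ - x * (1 - x * b)) := by
    rw [← spectrum.notMem_iff, hxp_spec]
    simpa using hμ
  have hVnorm : ‖μ • b‖ < 1 := by
    rw [norm_smul]
    have h0 : (0:ℝ) ≤ ‖μ‖ := norm_nonneg _
    have h0b : (0:ℝ) ≤ ‖b‖ := norm_nonneg _
    nlinarith
  exact KD_unit_aux hpp hpx hxb' hbx' hpb hU hVnorm

end Fwd

/-- `λ` is an isolated point of the spectrum of `a` iff `a - λ1` is
Koliha-Drazin invertible but not invertible. -/
theorem isolated_iff_kolihaDrazin_not_invertible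
    {A : Type*} [NormedRing A] [NormedAlgebra ℂ A] [CompleteSpace A] [Nontrivial A]
    (a : A) (l : ℂ) :
    (l ∈ spectrum ℂ a ∧ ∀ᶠ μ in nhdsWithin l {l}ᶜ, μ ∉ spectrum ℂ a) ↔
    ((∃ b : A, (a - algebraMap ℂ A l) * b = b * (a - algebraMap ℂ A l) ∧
        b * (a - algebraMap ℂ A l) * b = b ∧
        spectrum ℂ ((a - algebraMap ℂ A l) * b * (a - algebraMap ℂ A l) -
          (a - algebraMap ℂ A l)) = {0}) ∧
      ¬ IsUnit (a - algebraMap ℂ A l)) := by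
  have key : ∀ μ : ℂ, algebraMap ℂ A (μ - l) - (a - algebraMap ℂ A l) = algebraMap ℂ A μ - a := by
    intro μ; rw [map_sub]; abel
  have hneg : algebraMap ℂ A l - a = -(a - algebraMap ℂ A l) := by abel
  constructor
  · rintro ⟨hl, hev⟩
    have hnu : ¬ IsUnit (a - algebraMap ℂ A l) := by
      intro h
      exact (spectrum.mem_iff.mp hl) (by rw [hneg]; exact h.neg)
    rw [eventually_nhdsWithin_iff, Metric.eventually_nhds_iff] at hev
    obtain ⟨ε, hε, hball⟩ := hev
    have hres : ∀ z : ℂ, z ≠ 0 → ‖z‖ ≤ ε/2 →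
        IsUnit (algebraMap ℂ A z - (a - algebraMap ℂ A l)) := by
      intro z hz hn
      have h1 : dist (z + l) l < ε := by
        rw [dist_eq_norm, add_sub_cancel_right]
        exact lt_of_le_of_lt hn (by linarith)
      have h2 : z + l ∈ ({l}ᶜ : Set ℂ) := by
        simp only [Set.mem_compl_iff, Set.mem_singleton_iff]
        exact fun h => hz (by rwa [add_eq_right] at h)
      have h3 := hball h1 h2
      rw [spectrum.notMem_iff] at h3
      have h4 := key (z + l)
      rw [add_sub_cancel_right] at h4
      rw [h4]; exact h3
    obtain ⟨b, hb1, hb2, hb3⟩ := KD_forward (by linarith : (0:ℝ) < ε/2) hres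
    exact ⟨⟨b, hb1, hb2, hb3⟩, hnu⟩
  · rintro ⟨⟨b, hb1, hb2, hb3⟩, hnu⟩
    constructor
    · rw [spectrum.mem_iff]
      intro h
      rw [hneg] at h
      exact hnu ((IsUnit.neg_iff _).mp h)
    · rw [eventually_nhdsWithin_iff, Metric.eventually_nhds_iff]
      refine ⟨(1 + ‖b‖)⁻¹, by positivity, ?_⟩
      intro μ hd hne
      rw [Set.mem_compl_iff, Set.mem_singleton_iff] at hne
      have hsm : ‖μ - l‖ * (1 + ‖b‖) < 1 := by
        rw [dist_eq_norm, inv_eq_one_div, lt_div_iff₀ (by positivity : (0:ℝ) < 1 + ‖b‖)] at hd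
        exact hd
      have h5 := KD_backward hb1 hb2 hb3 (sub_ne_zero_of_ne hne) hsm
      rw [key μ] at h5
      exact spectrum.notMem_iff.mpr h5
end

section
/- Let A be a complex unital Banach algebra and a ∈ A. If a is Koliha-Drazin invertible with Koliha-Drazin inverse b, then p = 1 - ab is an idempotent commuting with a, ap is quasi-nilpotent, and a + p is invertible in A. -/
/-- if `b` is a Koliha-Drazin inverse of `a`, then `p = 1 - ab` is an
idempotent commuting with `a`, `ap` is quasi-nilpotent, and `a + p` is invertible. -/
theorem kolihaDrazin_spectral_idempotent
    {A : Type*} [NormedRing A] [NormedAlgebra ℂ A] [CompleteSpace A] [Nontrivial A]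
    (a b : A) (h1 : a * b = b * a) (h2 : b * a * b = b)
    (h3 : spectrum ℂ (a * b * a - a) = {0}) :
    (1 - a * b) * (1 - a * b) = 1 - a * b ∧
    a * (1 - a * b) = (1 - a * b) * a ∧
    spectrum ℂ (a * (1 - a * b)) = {0} ∧
    IsUnit (a + (1 - a * b)) := by
  set p : A := 1 - a * b with hp
  have habab : a * b * (a * b) = a * b := by
    calc a * b * (a * b) = a * (b * a * b) := by noncomm_ring
    _ = a * b := by rw [h2]
  have hidem : p * p = p := by
    have e : p * p = 1 - a * b - a * b + a * b * (a * b) := by rw [hp]; noncomm_ring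
    rw [e, habab, hp]; abel
  have haab : a * (a * b) = a * b * a := by rw [mul_assoc, h1]
  have hcomm : a * p = p * a := by
    have e : a * p = a - a * (a * b) := by rw [hp]; noncomm_ring
    rw [e, haab, hp]; noncomm_ring
  have hap : a * p = -(a * b * a - a) := by
    have e : a * p = a - a * (a * b) := by rw [hp]; noncomm_ring
    rw [e, haab]; abel
  have hspec : spectrum ℂ (a * p) = {0} := by
    rw [hap, ← spectrum.neg_eq, h3]
    simp
  refine ⟨hidem, hcomm, hspec, ?_⟩
  have hbp : b * p = 0 := by
    have e : b * p = b - b * (a * b) := by rw [hp]; noncomm_ring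
    rw [e, ← mul_assoc, h2, sub_self]
  have hpb : p * b = 0 := by
    have e : p * b = b - a * b * b := by rw [hp]; noncomm_ring
    rw [e, h1, h2, sub_self]
  have hu : IsUnit (1 + a * p) := by
    have h4 : (1 : ℂ) ∉ spectrum ℂ (a * b * a - a) := by rw [h3]; simp
    have h5 := spectrum.notMem_iff.mp h4
    rw [hap, ← sub_eq_add_neg]
    simpa using h5
  obtain ⟨v, hv1, hv2⟩ := isUnit_iff_exists.mp hu
  have hmul : (a + p) * (b + p) = 1 + a * p := by
    have e : (a + p) * (b + p) = a * b + a * p + p * b + p * p := by noncomm_ring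
    rw [e, hpb, hidem, hp]; abel
  have hmul' : (b + p) * (a + p) = 1 + a * p := by
    have e : (b + p) * (a + p) = b * a + b * p + p * a + p * p := by noncomm_ring
    rw [e, hbp, hidem, ← hcomm, ← h1, hp]; abel
  have hcu : (a + p) * (1 + a * p) = (1 + a * p) * (a + p) := by
    calc (a + p) * (1 + a * p) = (a + p) * ((b + p) * (a + p)) := by rw [hmul']
    _ = ((a + p) * (b + p)) * (a + p) := by rw [mul_assoc]
    _ = (1 + a * p) * (a + p) := by rw [hmul]
  have hvc : v * (a + p) = (a + p) * v := by
    calc v * (a + p) = v * ((a + p) * ((1 + a * p) * v)) := by rw [hv1, mul_one]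
    _ = (v * ((a + p) * (1 + a * p))) * v := by noncomm_ring
    _ = (v * ((1 + a * p) * (a + p))) * v := by rw [hcu]
    _ = (v * (1 + a * p)) * ((a + p) * v) := by noncomm_ring
    _ = (a + p) * v := by rw [hv2, one_mul]
  refine isUnit_iff_exists.mpr ⟨(b + p) * v, ?_, ?_⟩
  · rw [← mul_assoc, hmul, hv1]
  · rw [mul_assoc, hvc, ← mul_assoc, hmul', hv1]
end

section
/- Let A and B be complex unital Banach algebras and T : A → B a surjective unital algebra homomorphism with the Riesz property (i.e., the kernel N(T) is an inessential ideal). Then every idempotent q ∈ B lifts to an idempotent p ∈ A with T(p) = q; equivalently T⁻¹(B•) = A• + N(T). -/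
open Finset Filter Polynomial Topology
open scoped ENNReal NNReal



/-- Coefficients of `√(1+4x)`: `binCoef n = 4^n * (generalized binomial (1/2) n)`. -/
def binCoef : ℕ → ℤ
  | 0 => 1
  | (n+1) => (-1)^n * 2 * catalan n

lemma catalan_le_four_pow (n : ℕ) : catalan n ≤ 4^n := by
  have h1 : catalan n ≤ n.centralBinom := by
    calc catalan n ≤ (n+1) * catalan n := Nat.le_mul_of_pos_left _ (Nat.succ_pos n)
      _ = n.centralBinom := succ_mul_catalan_eq_centralBinom n
  have h2 : n.centralBinom ≤ 4^n := by
    have := Nat.sum_range_choose (2*n)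
    have hmem : n ∈ Finset.range (2*n+1) := by
      simp; omega
    have := Finset.single_le_sum (f := fun i => (2*n).choose i)
      (fun i _ => Nat.zero_le _) hmem
    calc n.centralBinom = (2*n).choose n := rfl
      _ ≤ 2^(2*n) := by omega
      _ = 4^n := by rw [pow_mul]; norm_num
  omega

lemma binCoef_abs_le (n : ℕ) : |(binCoef n : ℝ)| ≤ 4^n := by
  cases n with
  | zero => simp [binCoef]
  | succ n =>
    have h := catalan_le_four_pow n
    have : |(binCoef (n+1) : ℝ)| = 2 * catalan n := by
      rw [binCoef]
      push_cast
      rw [abs_mul, abs_mul, abs_pow]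
      simp [abs_of_nonneg, Nat.cast_nonneg]
    rw [this]
    have : (catalan n : ℝ) ≤ 4^n := by exact_mod_cast h
    calc 2 * (catalan n : ℝ) ≤ 2 * 4^n := by linarith
      _ ≤ 4 * 4^n := by nlinarith [pow_pos (by norm_num : (0:ℝ) < 4) n]
      _ = 4^(n+1) := by ring

lemma binCoef_conv_eq_zero {n : ℕ} (hn : 2 ≤ n) :
    ∑ k ∈ range (n+1), binCoef k * binCoef (n-k) = 0 := by
  obtain ⟨m, rfl⟩ : ∃ m, n = m + 2 := ⟨n - 2, by omega⟩
  rw [Finset.sum_range_succ', Finset.sum_range_succ]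
  have hmid : ∀ i ∈ range (m+1),
      binCoef (i+1) * binCoef (m+2-(i+1)) = (-1)^m * 4 * (catalan i * catalan (m-i)) := by
    intro i hi
    have hi' : i ≤ m := by simpa [Nat.lt_succ_iff] using hi
    have h1 : m+2-(i+1) = (m-i)+1 := by omega
    rw [h1, binCoef, binCoef]
    have hsgn : (-1:ℤ)^i * (-1)^(m-i) = (-1)^m := by
      rw [← pow_add]; congr 1; omega
    linear_combination (4 * (catalan i : ℤ) * (catalan (m-i) : ℤ)) * hsgn
  rw [Finset.sum_congr rfl hmid, ← Finset.mul_sum]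
  have hcat : ∑ i ∈ range (m+1), ((catalan i : ℤ) * (catalan (m-i) : ℤ)) = catalan (m+1) := by
    have h := catalan_succ m
    rw [Fin.sum_univ_eq_sum_range (fun i => catalan i * catalan (m-i)) (m+1)] at h
    exact_mod_cast congrArg (Nat.cast : ℕ → ℤ) h.symm
  rw [hcat]
  simp only [Nat.sub_self, Nat.sub_zero, binCoef, pow_succ]
  ring

lemma binCoef_zero : binCoef 0 = 1 := rfl

lemma binCoef_one : binCoef 1 = 2 := by simp [binCoef]

lemma commute_isUnit_of_isUnit_mul {M : Type*} [Monoid M] {x y : M}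
    (h : Commute x y) (hxy : IsUnit (x * y)) : IsUnit x := by
  obtain ⟨u, hu⟩ := hxy
  have hr : x * (y * ↑u⁻¹) = 1 := by
    rw [← mul_assoc, ← hu, Units.mul_inv]
  have hl : (↑u⁻¹ * y) * x = 1 := by
    rw [mul_assoc, ← h.eq, ← hu, Units.inv_mul]
  have heq : (↑u⁻¹ * y : M) = y * ↑u⁻¹ := by
    calc (↑u⁻¹ * y : M) = (↑u⁻¹ * y) * (x * (y * ↑u⁻¹)) := by rw [hr, mul_one]
      _ = ((↑u⁻¹ * y) * x) * (y * ↑u⁻¹) := by simp only [mul_assoc]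
      _ = y * ↑u⁻¹ := by rw [hl, one_mul]
  exact ⟨⟨x, y * ↑u⁻¹, hr, heq ▸ hl⟩, rfl⟩

lemma stage2 {A : Type*} [NormedRing A] [NormedAlgebra ℂ A] [CompleteSpace A]
    (a : A) (hsp : ∀ z ∈ spectrum ℂ (a*a - a), ‖z‖ ≤ 1/5) :
    ∃ p w : A, p * p = p ∧ p = a + w * (a*a - a) := by
  set c := a*a - a with hc
  have hac : Commute a c := ((Commute.refl a).mul_right (Commute.refl a)).sub_right (Commute.refl a)
  -- spectral radius bound
  have hρ : spectralRadius ℂ c ≤ ENNReal.ofReal (1/5) := by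
    rw [spectralRadius]
    refine iSup₂_le fun k hk => ?_
    rw [← enorm_eq_nnnorm, ← ofReal_norm]
    exact ENNReal.ofReal_le_ofReal (hsp k hk)
  have hlt : spectralRadius ℂ c < ENNReal.ofReal (2/9) :=
    lt_of_le_of_lt hρ (by rw [ENNReal.ofReal_lt_ofReal_iff (by norm_num)]; norm_num)
  have hev : ∀ᶠ n : ℕ in atTop, (‖c ^ n‖₊ : ℝ≥0∞) ^ (1/(n:ℝ)) < ENNReal.ofReal (2/9) :=
    (spectrum.pow_nnnorm_pow_one_div_tendsto_nhds_spectralRadius c).eventually_lt_const hlt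
  obtain ⟨N, hN⟩ := Filter.eventually_atTop.mp hev
  have hpow : ∀ n, N ≤ n → 1 ≤ n → ‖c ^ n‖ ≤ (2/9)^n := by
    intro n hn hn1
    have h := (hN n hn).le
    have h2 : ((‖c ^ n‖₊ : ℝ≥0∞) ^ (1/(n:ℝ))) ^ (n:ℕ) ≤ (ENNReal.ofReal (2/9)) ^ (n:ℕ) :=
      pow_le_pow_left' h n
    rw [← ENNReal.rpow_natCast (((‖c ^ n‖₊ : ℝ≥0∞)) ^ (1/(n:ℝ))) n, ← ENNReal.rpow_mul,
      one_div, inv_mul_cancel₀ (by exact_mod_cast Nat.one_le_iff_ne_zero.mp hn1 : (n:ℝ) ≠ 0),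
      ENNReal.rpow_one] at h2
    rw [← ENNReal.ofReal_pow (by norm_num)] at h2
    rw [← enorm_eq_nnnorm, ← ofReal_norm] at h2
    exact (ENNReal.ofReal_le_ofReal_iff (by positivity)).mp h2
  set M : ℝ := 1 + ∑ n ∈ Finset.range (N+1), ‖c ^ n‖ * (9/2)^n with hMdef
  have hM1 : 1 ≤ M := by
    have : (0:ℝ) ≤ ∑ n ∈ Finset.range (N+1), ‖c ^ n‖ * (9/2)^n :=
      Finset.sum_nonneg fun i _ => by positivity
    simp only [hMdef]; linarith
  have hMb : ∀ n, ‖c ^ n‖ ≤ M * (2/9)^n := by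
    intro n
    rcases lt_or_ge n (N+1) with h | h
    · have hterm : ‖c ^ n‖ * (9/2)^n ≤ ∑ m ∈ Finset.range (N+1), ‖c ^ m‖ * (9/2)^m :=
        Finset.single_le_sum (f := fun m => ‖c ^ m‖ * (9/2)^m)
          (fun i _ => by positivity) (Finset.mem_range.mpr h)
      have hterm' : ‖c ^ n‖ * (9/2)^n ≤ M := by simp only [hMdef]; linarith
      have : ‖c ^ n‖ = (‖c ^ n‖ * (9/2)^n) * (2/9)^n := by
        rw [mul_assoc, ← mul_pow]; norm_num
      rw [this]
      exact mul_le_mul_of_nonneg_right hterm' (by positivity)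
    · calc ‖c ^ n‖ ≤ (2/9)^n := hpow n (by omega) (by omega)
        _ ≤ M * (2/9)^n := le_mul_of_one_le_left (by positivity) hM1
  have hcast : ∀ m : ℤ, ‖((m:ℂ))‖ = |(m:ℝ)| := by
    intro m
    rw [show ((m:ℂ)) = (((m:ℝ) : ℂ)) by push_cast; ring, Complex.norm_real, Real.norm_eq_abs]
  have hp89 : ∀ n : ℕ, (8/9:ℝ)^n = 4^n * (2/9)^n := fun n => by
    rw [← mul_pow]; norm_num
  have hsummand : ∀ n, ‖(binCoef n : ℂ) • c ^ n‖ ≤ M * (8/9)^n := by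
    intro n
    rw [norm_smul, hcast]
    calc |(binCoef n : ℝ)| * ‖c ^ n‖ ≤ 4^n * (M * (2/9)^n) :=
          mul_le_mul (binCoef_abs_le n) (hMb n) (norm_nonneg _) (by positivity)
      _ = M * (8/9)^n := by rw [hp89]; ring
  have hgeo : Summable (fun n : ℕ => M * (8/9)^n) :=
    (summable_geometric_of_lt_one (by norm_num) (by norm_num)).mul_left _
  have hsum : Summable (fun n => ‖(binCoef n : ℂ) • c ^ n‖) :=
    Summable.of_nonneg_of_le (fun n => norm_nonneg _) hsummand hgeo
  have hsum' : Summable (fun n => (binCoef n : ℂ) • c ^ n) := hsum.of_norm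
  set s : A := ∑' n, (binCoef n : ℂ) • c ^ n with hs
  -- the tail series
  have hsummandv : ∀ n, ‖(binCoef (n+1) : ℂ) • c ^ n‖ ≤ (4*M) * (8/9)^n := by
    intro n
    rw [norm_smul, hcast]
    calc |(binCoef (n+1) : ℝ)| * ‖c ^ n‖ ≤ 4^(n+1) * (M * (2/9)^n) :=
          mul_le_mul (binCoef_abs_le (n+1)) (hMb n) (norm_nonneg _) (by positivity)
      _ = (4*M) * (8/9)^n := by rw [hp89]; ring
  have hsumv : Summable (fun n => (binCoef (n+1) : ℂ) • c ^ n) :=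
    (Summable.of_nonneg_of_le (fun n => norm_nonneg _) hsummandv
      ((summable_geometric_of_lt_one (by norm_num) (by norm_num)).mul_left _)).of_norm
  set v : A := ∑' n, (binCoef (n+1) : ℂ) • c ^ n with hv
  have hvc : s = 1 + v * c := by
    have h1 : v * c = ∑' n, (binCoef (n+1) : ℂ) • c ^ (n+1) := by
      rw [hv, ← hsumv.tsum_mul_right]
      exact tsum_congr fun n => by rw [smul_mul_assoc, ← pow_succ]
    have h2 : s = (binCoef 0 : ℂ) • c ^ 0 + ∑' n, (binCoef (n+1) : ℂ) • c ^ (n+1) := by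
      rw [hs]; exact hsum'.tsum_eq_zero_add
    rw [h2, h1, binCoef_zero]
    simp
  -- commutation facts
  have hcs : Commute c s :=
    Commute.tsum_right c fun n => (((Commute.refl c).pow_right n).smul_right _)
  have has : Commute a s :=
    Commute.tsum_right a fun n => ((hac.pow_right n).smul_right _)
  have hcv : Commute c v :=
    Commute.tsum_right c fun n => (((Commute.refl c).pow_right n).smul_right _)
  have hav : Commute a v :=
    Commute.tsum_right a fun n => ((hac.pow_right n).smul_right _)
  -- Cauchy product: s * s = 1 + 4c
  have hss : s * s = 1 + (4:ℂ) • c := by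
    rw [hs, tsum_mul_tsum_eq_tsum_sum_antidiagonal_of_summable_norm hsum hsum]
    have hterm : ∀ n : ℕ, (∑ kl ∈ Finset.HasAntidiagonal.antidiagonal n,
        ((binCoef kl.1 : ℂ) • c ^ kl.1) * ((binCoef kl.2 : ℂ) • c ^ kl.2))
        = ((∑ k ∈ Finset.range (n+1), binCoef k * binCoef (n-k) : ℤ) : ℂ) • c ^ n := by
      intro n
      rw [Finset.Nat.sum_antidiagonal_eq_sum_range_succ_mk]
      push_cast
      rw [Finset.sum_smul]
      refine Finset.sum_congr rfl fun k hk => ?_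
      have hk' : k ≤ n := by simpa [Nat.lt_succ_iff] using hk
      rw [smul_mul_smul_comm, ← pow_add]
      congr 2
      omega
    rw [tsum_congr hterm]
    rw [tsum_eq_sum (s := ({0, 1} : Finset ℕ)) ?side]
    case side =>
      intro n hn
      have hn2 : 2 ≤ n := by
        simp only [Finset.mem_insert, Finset.mem_singleton] at hn
        omega
      rw [binCoef_conv_eq_zero hn2]
      simp
    have e0 : (∑ k ∈ Finset.range 1, binCoef k * binCoef (0-k)) = 1 := by
      simp [binCoef_zero]
    have e1 : (∑ k ∈ Finset.range 2, binCoef k * binCoef (1-k)) = 4 := by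
      simp [Finset.sum_range_succ, binCoef_zero, binCoef_one]
    rw [Finset.sum_pair (by norm_num : (0:ℕ) ≠ 1)]
    rw [e0, e1]
    simp
  -- invertibility of 1 + 4c
  have hunit : IsUnit ((1:A) + (4:ℂ) • c) := by
    have hne : (-4⁻¹ : ℂ) ∉ spectrum ℂ c := by
      intro hmem
      have := hsp _ hmem
      rw [norm_neg, norm_inv] at this
      simp at this
      norm_num at this
    have hu1 : IsUnit (algebraMap ℂ A (-4⁻¹) - c) := spectrum.notMem_iff.mp hne
    have key : (1:A) + (4:ℂ) • c = algebraMap ℂ A (-4) * (algebraMap ℂ A (-4⁻¹) - c) := by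
      rw [Algebra.algebraMap_eq_smul_one, Algebra.algebraMap_eq_smul_one,
        smul_mul_assoc, one_mul,
        show ((-4:ℂ)) • ((-4⁻¹:ℂ) • (1:A) - c) = ((-4:ℂ)*(-4⁻¹:ℂ)) • (1:A) - (-4:ℂ) • c from
          by rw [smul_sub, smul_smul]]
      norm_num [neg_smul, sub_neg_eq_add]
    rw [key]
    exact ((IsUnit.map (algebraMap ℂ A) (Ne.isUnit (by norm_num : (-4:ℂ) ≠ 0)))).mul hu1
  obtain ⟨U, hU⟩ := hunit
  have hcU : Commute c ↑U := by rw [hU]; exact (Commute.one_right c).add_right ((Commute.refl c).smul_right _)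
  have haU : Commute a ↑U := by rw [hU]; exact (Commute.one_right a).add_right (hac.smul_right _)
  have hsU : Commute s ↑U := by rw [hU]; exact (Commute.one_right s).add_right (hcs.symm.smul_right _)
  set e : A := ↑U⁻¹ with he
  have hce : Commute c e := hcU.units_inv_right
  have hae : Commute a e := haU.units_inv_right
  have hse : Commute s e := hsU.units_inv_right
  set t : A := s * e with ht
  have hst : s * t = 1 := by
    rw [ht, ← mul_assoc, hss, ← hU, Units.mul_inv]
  have hts : t * s = 1 := by
    rw [ht, mul_assoc, ← hse.eq, ← mul_assoc, hss, ← hU, Units.mul_inv]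
  have hat : Commute a t := has.mul_right hae
  have hct : Commute c t := hcs.mul_right hce
  set b : A := (2:ℂ) • a - 1 with hb
  have hbt : Commute b t := ((hat.smul_left (2:ℂ)).sub_left (Commute.one_left t))
  have hbb : b * b = 1 + (4:ℂ) • c := by
    rw [hb, hc, sub_mul, mul_sub, mul_sub]
    simp only [one_mul, mul_one, smul_mul_assoc, mul_smul_comm, smul_smul]
    norm_num
    module
  -- the idempotent
  set X : A := 1 + b * t with hX
  have hbtbt : (b*t)*(b*t) = 1 := by
    have h1 : (b*t)*(b*t) = (b*b)*(t*t) := by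
      rw [mul_assoc, ← mul_assoc t b t, ← hbt.eq, mul_assoc b t t, ← mul_assoc]
    rw [h1, hbb, ← hss, mul_assoc, ← mul_assoc s t t, hst, one_mul, hst]
  have hXX : X * X = (2:ℂ) • X := by
    rw [hX, mul_add, add_mul, add_mul, hbtbt]
    simp only [one_mul, mul_one]
    module
  set p : A := (2⁻¹:ℂ) • X with hp
  refine ⟨p, (-2⁻¹:ℂ) • (b*(t*v)), ?_, ?_⟩
  · rw [hp, smul_mul_assoc, mul_smul_comm, smul_smul, hXX, smul_smul]
    norm_num
  · -- p = a + w * c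
    rw [smul_mul_assoc]
    have h2 : v * c = s - 1 := by rw [hvc]; abel
    have h3 : (b*(t*v))*c = b - b*t := by
      rw [mul_assoc, mul_assoc, h2, mul_sub, mul_one, hts, mul_sub, mul_one]
    rw [h3]
    calc p = (2⁻¹:ℂ)•(1:A) + (2⁻¹:ℂ)•(b*t) := by rw [hp, hX]; module
      _ = (a - (2⁻¹:ℂ)•b) + (2⁻¹:ℂ)•(b*t) := by
          rw [show a - (2⁻¹:ℂ)•b = (2⁻¹:ℂ)•(1:A) from by rw [hb]; module]
      _ = a + (-2⁻¹:ℂ)•(b - b*t) := by module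

lemma norm_prod_one_sub_sub_one_le {ι : Type*} (s : Finset ι) (f : ι → ℂ) (t : ℝ)
    (ht : 0 ≤ t) (hf : ∀ i ∈ s, ‖f i‖ ≤ t) :
    ‖(∏ i ∈ s, (1 - f i)) - 1‖ ≤ (1+t)^s.card - 1 := by
  induction s using Finset.cons_induction with
  | empty => simp
  | cons i s hi ih =>
    rw [Finset.prod_cons, Finset.card_cons]
    have hfi : ‖f i‖ ≤ t := hf i (Finset.mem_cons_self i s)
    have ih' := ih fun j hj => hf j (Finset.mem_cons_of_mem hj)
    have hkey : (1 - f i) * (∏ j ∈ s, (1 - f j)) - 1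
        = (1 - f i) * ((∏ j ∈ s, (1 - f j)) - 1) + (- f i) := by ring
    rw [hkey]
    have h1 : ‖(1:ℂ) - f i‖ ≤ 1 + t := by
      calc ‖(1:ℂ) - f i‖ ≤ ‖(1:ℂ)‖ + ‖f i‖ := norm_sub_le _ _
        _ ≤ 1 + t := by rw [norm_one]; linarith
    have h2 : (0:ℝ) ≤ (1+t)^s.card - 1 := by
      have := one_le_pow₀ (by linarith : (1:ℝ) ≤ 1 + t) (n := s.card)
      linarith
    calc ‖(1 - f i) * ((∏ j ∈ s, (1 - f j)) - 1) + (- f i)‖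
        ≤ ‖(1 - f i)‖ * ‖(∏ j ∈ s, (1 - f j)) - 1‖ + ‖f i‖ := by
          refine (norm_add_le _ _).trans ?_
          rw [norm_mul, norm_neg]
      _ ≤ (1+t) * ((1+t)^s.card - 1) + t := by
          have := mul_le_mul h1 ih' (norm_nonneg _) (by linarith)
          linarith
      _ = (1+t)^(s.card+1) - 1 := by ring

set_option maxHeartbeats 1600000 in
/-- if `T : A → B` is a surjective unital algebra homomorphism with the
Riesz property (its kernel is an inessential ideal: every `z` with `T z = 0` has
spectrum which is finite or a sequence converging to `0`), then every idempotent of `B`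
lifts to an idempotent of `A`. -/
theorem idempotent_lifting_riesz_property
    {A B : Type*} [NormedRing A] [NormedAlgebra ℂ A] [CompleteSpace A] [Nontrivial A]
    [NormedRing B] [NormedAlgebra ℂ B] [CompleteSpace B] [Nontrivial B]
    (T : A →ₐ[ℂ] B) (hsurj : Function.Surjective T)
    (hriesz : ∀ z : A, T z = 0 → ∀ ε : ℝ, 0 < ε →
      (spectrum ℂ z \ Metric.ball (0 : ℂ) ε).Finite)
    (q : B) (hq : q * q = q) :
    ∃ p : A, p * p = p ∧ T p = q := by
  obtain ⟨a₀, ha₀⟩ := hsurj q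
  have hTc₀ : T (a₀*a₀ - a₀) = 0 := by
    rw [map_sub, map_mul, ha₀, hq, sub_self]
  have hfin := hriesz _ hTc₀ (1/256) (by norm_num)
  -- easy direction of the spectral mapping theorem for z ↦ z² - z
  have hmap : ∀ z ∈ spectrum ℂ a₀, z*z - z ∈ spectrum ℂ (a₀*a₀ - a₀) := by
    intro z hz
    rw [spectrum.mem_iff] at hz ⊢
    intro hcon
    apply hz
    have hfact : algebraMap ℂ A (z*z - z) - (a₀*a₀ - a₀)
        = -((a₀ - algebraMap ℂ A z) * (a₀ + algebraMap ℂ A (z-1))) := by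
      rw [Algebra.algebraMap_eq_smul_one, Algebra.algebraMap_eq_smul_one,
        Algebra.algebraMap_eq_smul_one, mul_add, sub_mul, sub_mul]
      simp only [smul_mul_assoc, mul_smul_comm, smul_smul, one_mul, mul_one]
      module
    rw [hfact] at hcon
    have hPQ : IsUnit ((a₀ - algebraMap ℂ A z) * (a₀ + algebraMap ℂ A (z-1))) := by
      simpa using hcon.neg
    have hcomm : Commute (a₀ - algebraMap ℂ A z) (a₀ + algebraMap ℂ A (z-1)) := by
      have h1 : Commute a₀ (a₀ + algebraMap ℂ A (z-1)) :=
        (Commute.refl a₀).add_right (Algebra.commute_algebraMap_left (z-1) a₀).symm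
      have h2 : Commute (algebraMap ℂ A z) (a₀ + algebraMap ℂ A (z-1)) :=
        Algebra.commute_algebraMap_left _ _
      exact h1.sub_left h2
    have := (commute_isUnit_of_isUnit_mul hcomm hPQ).neg
    rwa [neg_sub] at this
  -- the set of "bad" spectral points is finite
  have hWfin : {z ∈ spectrum ℂ a₀ | 1/256 < ‖z*z - z‖}.Finite := by
    have hsub : {z ∈ spectrum ℂ a₀ | 1/256 < ‖z*z - z‖} ⊆
        ⋃ v ∈ (spectrum ℂ (a₀*a₀ - a₀) \ Metric.ball 0 (1/256)), {z : ℂ | z*z - z = v} := by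
      rintro z ⟨hz1, hz2⟩
      refine Set.mem_biUnion ⟨hmap z hz1, ?_⟩ rfl
      simp only [Metric.mem_ball, dist_zero_right, not_lt]
      linarith
    refine Set.Finite.subset (Set.Finite.biUnion hfin fun v _ => ?_) hsub
    refine Set.Finite.subset
      (Polynomial.finite_setOf_isRoot (p := (X^2 - X - C v : Polynomial ℂ)) ?_) ?_
    · intro h
      have := congrArg (fun p => Polynomial.coeff p 2) h
      simp [Polynomial.coeff_X_pow, Polynomial.coeff_X, Polynomial.coeff_C] at this
    · intro z hz
      simp only [Set.mem_setOf_eq] at hz ⊢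
      simp only [Polynomial.IsRoot, Polynomial.eval_sub, Polynomial.eval_pow,
        Polynomial.eval_X, Polynomial.eval_C]
      rw [pow_two]
      linear_combination hz
  -- bad points, padded with a dummy point to make it nonempty
  set W : Finset ℂ := insert (3:ℂ) hWfin.toFinset with hWdef
  have hWlb : ∀ w ∈ W, 1/256 < ‖w*w - w‖ := by
    intro w hw
    rcases Finset.mem_insert.mp hw with h | h
    · subst h
      rw [show (3*3 - 3 : ℂ) = 6 by norm_num]
      rw [show ‖(6:ℂ)‖ = 6 by simp]
      norm_num
    · exact (hWfin.mem_toFinset.mp h).2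
  have hWne : W.Nonempty := Finset.insert_nonempty _ _
  set μ : ℝ := (W.image fun w => ‖w*w - w‖).min' (hWne.image _) with hμdef
  have hμlb : 1/256 < μ := by
    obtain ⟨w, hw, hweq⟩ := Finset.mem_image.mp ((W.image fun w => ‖w*w - w‖).min'_mem (hWne.image _))
    rw [hμdef, ← hweq]
    exact hWlb w hw
  have hμle : ∀ w ∈ W, μ ≤ ‖w*w - w‖ := fun w hw =>
    Finset.min'_le _ _ (Finset.mem_image_of_mem _ hw)
  set θ : ℝ := (1/256) / μ with hθdef
  have hμ0 : 0 < μ := by linarith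
  have hθ0 : 0 ≤ θ := by positivity
  have hθ1 : θ < 1 := by
    rw [hθdef, div_lt_one hμ0]; linarith
  -- bound for the spectrum of a₀
  obtain ⟨R, hR1, hRb⟩ : ∃ R : ℝ, 1 ≤ R ∧ ∀ z ∈ spectrum ℂ a₀, ‖z‖ ≤ R := by
    obtain ⟨r, hr⟩ := (spectrum.isBounded a₀ (𝕜 := ℂ)).subset_closedBall 0
    refine ⟨max r 1, le_max_right _ _, fun z hz => ?_⟩
    have := hr hz
    rw [Metric.mem_closedBall, dist_zero_right] at this
    exact this.trans (le_max_left _ _)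
  -- choice of N
  obtain ⟨N, hN1, hNb⟩ : ∃ N : ℕ, 1 ≤ N ∧ R * ((1+θ^N)^(W.card) - 1) ≤ 1/100 := by
    have h1 : Tendsto (fun N : ℕ => R*((1+θ^N)^(W.card) - 1)) atTop
        (𝓝 (R*((1+(0:ℝ))^(W.card) - 1))) :=
      ((((tendsto_pow_atTop_nhds_zero_of_lt_one hθ0 hθ1).const_add 1).pow _).sub_const 1).const_mul R
    simp only [add_zero, one_pow, sub_self, mul_zero] at h1
    have h2 := h1.eventually_lt_const (by norm_num : (0:ℝ) < 1/100)
    obtain ⟨N₀, hN₀⟩ := Filter.eventually_atTop.mp h2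
    exact ⟨max N₀ 1, le_max_right _ _, (hN₀ _ (le_max_left _ _)).le⟩
  -- the spectral surgery polynomial
  set Φ : Polynomial ℂ := X * ∏ w ∈ W, (1 - C ((w*w - w)⁻¹^N) * (X*X - X)^N) with hΦdef
  have hφeval : ∀ z : ℂ, Φ.eval z
      = z * ∏ w ∈ W, (1 - ((w*w - w)⁻¹^N) * (z*z - z)^N) := by
    intro z
    simp [hΦdef, Polynomial.eval_prod]
  -- divisibility : Φ - X = (X² - X) * H
  obtain ⟨H, hHeq⟩ : ∃ H : Polynomial ℂ, Φ - X = (X*X - X) * H := by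
    have hroot : ((∏ w ∈ W, (1 - C ((w*w - w)⁻¹^N) * (X*X - X)^N)) - 1).IsRoot 1 := by
      simp [Polynomial.IsRoot, Polynomial.eval_prod, zero_pow (by omega : N ≠ 0)]
    obtain ⟨H, hH⟩ := Polynomial.dvd_iff_isRoot.mpr hroot
    rw [map_one] at hH
    refine ⟨H, ?_⟩
    rw [hΦdef]
    linear_combination (X : Polynomial ℂ) * hH
  set a : A := Polynomial.aeval a₀ Φ with hadef
  have hTa : T a = q := by
    have h1 : a - a₀ = (a₀*a₀ - a₀) * Polynomial.aeval a₀ H := by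
      have h0 := congrArg (Polynomial.aeval a₀ (R := ℂ)) hHeq
      simpa [map_sub, map_mul] using h0
    have h2 : a = a₀ + (a₀*a₀ - a₀) * Polynomial.aeval a₀ H :=
      by rw [← h1]; abel
    rw [h2, map_add, map_mul, hTc₀, zero_mul, add_zero, ha₀]
  -- spectral bound for a² - a
  have hnon : (spectrum ℂ a₀).Nonempty := spectrum.nonempty a₀
  have hψspec : spectrum ℂ (a*a - a)
      = (fun z => Polynomial.eval z (Φ*Φ - Φ)) '' spectrum ℂ a₀ := by
    have h3 : a*a - a = Polynomial.aeval a₀ (Φ*Φ - Φ) := by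
      rw [map_sub, map_mul, hadef]
    rw [h3, spectrum.map_polynomial_aeval_of_nonempty a₀ _ hnon]
  have hbound : ∀ z ∈ spectrum ℂ (a*a - a), ‖z‖ ≤ 1/5 := by
    rw [hψspec]
    rintro _ ⟨z, hz, rfl⟩
    simp only [Polynomial.eval_sub, Polynomial.eval_mul]
    by_cases hcase : 1/256 < ‖z*z - z‖
    · -- z is a bad point : φ(z) = 0
      have hzW : z ∈ W := Finset.mem_insert_of_mem (hWfin.mem_toFinset.mpr ⟨hz, hcase⟩)
      have hzne : z*z - z ≠ 0 := by
        intro h0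
        rw [h0, norm_zero] at hcase
        norm_num at hcase
      have hφ0 : Φ.eval z = 0 := by
        rw [hφeval z]
        have hfac : (1 - ((z*z - z)⁻¹^N) * (z*z - z)^N) = 0 := by
          rw [← mul_pow, inv_mul_cancel₀ hzne, one_pow, sub_self]
        rw [Finset.prod_eq_zero hzW hfac, mul_zero]
      rw [hφ0]
      norm_num
    · push_neg at hcase
      have hzR : ‖z‖ ≤ R := hRb z hz
      have hprod : ‖(∏ w ∈ W, (1 - ((w*w - w)⁻¹^N) * (z*z - z)^N)) - 1‖
          ≤ (1+θ^N)^(W.card) - 1 := by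
        refine norm_prod_one_sub_sub_one_le W _ (θ^N) (by positivity) fun w hw => ?_
        rw [norm_mul, norm_pow, norm_pow, norm_inv, ← mul_pow]
        refine pow_le_pow_left₀ (by positivity) ?_ N
        have hw1 : μ ≤ ‖w*w - w‖ := hμle w hw
        have hinv : ‖w*w - w‖⁻¹ ≤ μ⁻¹ := by
          apply inv_anti₀ hμ0 hw1
        calc ‖w*w - w‖⁻¹ * ‖z*z - z‖ ≤ μ⁻¹ * (1/256) :=
              mul_le_mul hinv hcase (norm_nonneg _) (by positivity)
          _ = θ := by rw [hθdef]; ring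
      have hφz : ‖Φ.eval z - z‖ ≤ 1/100 := by
        have he : Φ.eval z - z
            = z * ((∏ w ∈ W, (1 - ((w*w - w)⁻¹^N) * (z*z - z)^N)) - 1) := by
          rw [hφeval z]; ring
        rw [he, norm_mul]
        calc ‖z‖ * ‖(∏ w ∈ W, (1 - ((w*w - w)⁻¹^N) * (z*z - z)^N)) - 1‖
            ≤ R * ((1+θ^N)^(W.card) - 1) :=
              mul_le_mul hzR hprod (norm_nonneg _) (by linarith)
          _ ≤ 1/100 := hNb
      have hsmall : ‖z‖ ≤ 1/7 ∨ ‖z - 1‖ ≤ 1/7 := by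
        by_contra hcon
        push_neg at hcon
        have hnm : ‖z*z - z‖ = ‖z‖ * ‖z - 1‖ := by
          rw [show z*z - z = z*(z-1) by ring, norm_mul]
        nlinarith [hcon.1, hcon.2]
      have h2 : ‖Φ.eval z - 1‖ ≤ ‖Φ.eval z - z‖ + ‖z - 1‖ := by
        calc ‖Φ.eval z - 1‖ = ‖(Φ.eval z - z) + (z - 1)‖ := by rw [sub_add_sub_cancel]
          _ ≤ ‖Φ.eval z - z‖ + ‖z - 1‖ := norm_add_le _ _
      have h3 : ‖Φ.eval z‖ ≤ ‖Φ.eval z - z‖ + ‖z‖ := by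
        calc ‖Φ.eval z‖ = ‖(Φ.eval z - z) + z‖ := by rw [sub_add_cancel]
          _ ≤ ‖Φ.eval z - z‖ + ‖z‖ := norm_add_le _ _
      have hnm2 : ‖Φ.eval z * Φ.eval z - Φ.eval z‖ = ‖Φ.eval z‖ * ‖Φ.eval z - 1‖ := by
        rw [show Φ.eval z * Φ.eval z - Φ.eval z = Φ.eval z * (Φ.eval z - 1) by ring, norm_mul]
      rw [hnm2]
      rcases hsmall with h | h
      · have h4 : ‖Φ.eval z‖ ≤ 1/100 + 1/7 := by linarith
        have h5 : ‖Φ.eval z - 1‖ ≤ ‖Φ.eval z‖ + 1 := by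
          calc ‖Φ.eval z - 1‖ ≤ ‖Φ.eval z‖ + ‖(1:ℂ)‖ := norm_sub_le _ _
            _ = ‖Φ.eval z‖ + 1 := by rw [norm_one]
        nlinarith [norm_nonneg (Φ.eval z), norm_nonneg (Φ.eval z - 1)]
      · have h4 : ‖Φ.eval z - 1‖ ≤ 1/100 + 1/7 := by linarith
        have h5 : ‖Φ.eval z‖ ≤ ‖Φ.eval z - 1‖ + 1 := by
          calc ‖Φ.eval z‖ = ‖(Φ.eval z - 1) + 1‖ := by rw [sub_add_cancel]
            _ ≤ ‖Φ.eval z - 1‖ + ‖(1:ℂ)‖ := norm_add_le _ _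
            _ = ‖Φ.eval z - 1‖ + 1 := by rw [norm_one]
        nlinarith [norm_nonneg (Φ.eval z), norm_nonneg (Φ.eval z - 1)]
  obtain ⟨p, w, hpp, hpw⟩ := stage2 a hbound
  refine ⟨p, hpp, ?_⟩
  rw [hpw, map_add, map_mul, map_sub, map_mul, hTa, hq, sub_self, mul_zero, add_zero]
end

section
/- Let A be a complex unital Banach algebra and a ∈ A. Then a is Drazin invertible but not invertible if and only if 0 is a pole of the resolvent of a, i.e., 0 is an isolated point of σ(a) and there exists a nonzero idempotent p with ap = pa, (ap)^k = 0 for some k ≥ 1, and a + p invertible. -/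
open Finset

private lemma idem_pow' {A : Type*} [Monoid A] {p : A} (hp : p * p = p) :
    ∀ k : ℕ, 1 ≤ k → p ^ k = p := by
  intro k hk
  induction k with
  | zero => omega
  | succ n ih =>
    rcases Nat.eq_or_lt_of_le hk with h | h
    · rw [← h, pow_one]
    · rw [pow_succ, ih (by omega), hp]

/-- `a` is Drazin invertible but not invertible iff `0` is a pole of the
resolvent of `a`, i.e. `0` is an isolated point of the spectrum of `a` and there is a
nonzero idempotent `p` commuting with `a` such that `(ap)^k = 0` for some `k ≥ 1` and
`a + p` is invertible. -/
theorem drazin_not_invertible_iff_zero_pole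
    {A : Type*} [NormedRing A] [NormedAlgebra ℂ A] [CompleteSpace A] [Nontrivial A]
    (a : A) :
    ((∃ b : A, ∃ m : ℕ, a * b = b * a ∧ b * a * b = b ∧ a ^ m * b * a = a ^ m) ∧
      ¬ IsUnit a) ↔
    (((0 : ℂ) ∈ spectrum ℂ a ∧ ∀ᶠ μ in nhdsWithin (0 : ℂ) {(0 : ℂ)}ᶜ, μ ∉ spectrum ℂ a) ∧
     ∃ p : A, p ≠ 0 ∧ p * p = p ∧ a * p = p * a ∧
       (∃ k : ℕ, 1 ≤ k ∧ (a * p) ^ k = 0) ∧ IsUnit (a + p)) := by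
  constructor
  · rintro ⟨⟨b, m, hab, hbab, ham⟩, hna⟩
    -- basic consequences
    have hm1 : 1 ≤ m := by
      by_contra h
      have hm0 : m = 0 := by omega
      rw [hm0, pow_zero, one_mul] at ham
      exact hna ⟨⟨a, b, by rw [hab, ham], ham⟩, rfl⟩
    set p : A := 1 - b * a with hp_def
    have hba : b * a = 1 - p := by rw [hp_def, sub_sub_cancel]
    have hpp : p * p = p := by
      have h : (b * a) * (b * a) = b * a := by
        calc (b * a) * (b * a) = (b * a * b) * a := by noncomm_ring
        _ = b * a := by rw [hbab]
      rw [hp_def]; noncomm_ring [h]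
    have hap : a * p = p * a := by
      have h : a * (b * a) = (b * a) * a := by rw [← mul_assoc, hab]
      rw [hp_def, mul_sub, sub_mul, mul_one, one_mul, h]
    have hbba : b * (b * a) = b := by
      calc b * (b * a) = b * (a * b) := by rw [hab]
      _ = b * a * b := by rw [mul_assoc]
      _ = b := hbab
    have hbp : b * p = 0 := by
      rw [hp_def, mul_sub, mul_one, hbba, sub_self]
    have hpb : p * b = 0 := by
      rw [hp_def, sub_mul, one_mul, hbab, sub_self]
    have hamp : a ^ m * p = 0 := by
      rw [hp_def, mul_sub, mul_one, ← mul_assoc, ham, sub_self]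
    have hp0 : p ≠ 0 := by
      intro h
      have hba1 : b * a = 1 := by rw [hba, h, sub_zero]
      exact hna ⟨⟨a, b, by rw [hab, hba1], hba1⟩, rfl⟩
    have hca : Commute a p := hap
    have hcab : Commute a b := hab
    have hapk : (a * p) ^ m = 0 := by
      rw [hca.mul_pow, idem_pow' hpp m hm1, hamp]
    -- invertibility of a + p
    set q : A := ∑ i ∈ range m, (-(a * p)) ^ i with hq_def
    have hnapm : (-(a * p)) ^ m = 0 := by
      rw [neg_pow, hapk, mul_zero]
    have hq1 : q * (1 + a * p) = 1 := by
      have h := geom_sum_mul (-(a * p)) m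
      rw [hnapm] at h
      have h2 : q * (-(a * p) - 1) = -1 := by rw [hq_def, h, zero_sub]
      calc q * (1 + a * p) = -(q * (-(a * p) - 1)) := by noncomm_ring
      _ = 1 := by rw [h2, neg_neg]
    have hcaq : Commute a q :=
      Commute.sum_right _ _ _ fun i _ => (((Commute.refl a).mul_right hca).neg_right).pow_right i
    have hcpq : Commute p q :=
      Commute.sum_right _ _ _ fun i _ => ((hca.symm.mul_right (Commute.refl p)).neg_right).pow_right i
    have ha_qp : a * (q * p) = q * (a * p) := by
      rw [← mul_assoc, hcaq.eq, mul_assoc]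
    have hp_qp : p * (q * p) = q * p := by
      rw [← mul_assoc, hcpq.eq, mul_assoc, hpp]
    have happ : (a * p) * p = a * p := by rw [mul_assoc, hpp]
    have hsum : q * (a * p) + q * p = p := by
      have h : (q * (1 + a * p)) * p = q * p + q * (a * p) := by
        rw [mul_add, mul_one, add_mul, mul_assoc q (a * p) p, happ]
      rw [add_comm, ← h, hq1, one_mul]
    have hab1 : a * b = 1 - p := hab.trans hba
    have hc1 : (a + p) * (b + q * p) = 1 := by
      have e1 : (a + p) * (b + q * p) = a * b + p * b + (a * (q * p) + p * (q * p)) := by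
        noncomm_ring
      rw [e1, hab1, hpb, ha_qp, hp_qp, hsum]; abel
    have hc2 : (b + q * p) * (a + p) = 1 := by
      have e1 : (b + q * p) * (a + p) = b * a + b * p + (q * (p * a) + q * (p * p)) := by
        noncomm_ring
      rw [e1, hba, hbp, ← hap, hpp, hsum]; abel
    have hup : IsUnit (a + p) := ⟨⟨a + p, b + q * p, hc1, hc2⟩, rfl⟩
    -- spectral part
    refine ⟨⟨(spectrum.zero_mem_iff ℂ).mpr hna, ?_⟩, p, hp0, hpp, hap, ⟨m, hm1, hapk⟩, hup⟩
    rw [eventually_nhdsWithin_iff, Metric.eventually_nhds_iff]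
    refine ⟨(‖b‖ * ‖(1 : A)‖ + 1)⁻¹, by positivity, ?_⟩
    intro μ hdist hμne
    rw [Set.mem_compl_iff, Set.mem_singleton_iff] at hμne
    rw [dist_zero_right] at hdist
    rw [spectrum.notMem_iff]
    set φ := algebraMap ℂ A with hφ
    set cp : A := ∑ i ∈ range m, φ (μ⁻¹ ^ (i + 1)) * (a ^ i * p) with hcp_def
    have hxcp : (φ μ - a) * cp = p := by
      rw [hcp_def, Finset.mul_sum]
      have hterm : ∀ i ∈ range m,
          (φ μ - a) * (φ (μ⁻¹ ^ (i + 1)) * (a ^ i * p))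
          = (fun i => φ (μ⁻¹ ^ i) * (a ^ i * p)) i
            - (fun i => φ (μ⁻¹ ^ i) * (a ^ i * p)) (i + 1) := by
        intro i _
        have hc : μ * μ⁻¹ ^ (i + 1) = μ⁻¹ ^ i := by
          rw [pow_succ]
          field_simp
        have h1 : φ μ * (φ (μ⁻¹ ^ (i + 1)) * (a ^ i * p)) = φ (μ⁻¹ ^ i) * (a ^ i * p) := by
          rw [← mul_assoc, ← map_mul, hc]
        have h2 : a * (φ (μ⁻¹ ^ (i + 1)) * (a ^ i * p))
            = φ (μ⁻¹ ^ (i + 1)) * (a ^ (i + 1) * p) := by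
          rw [← mul_assoc, ← Algebra.commutes, mul_assoc, ← mul_assoc a, ← pow_succ']
        simp only [sub_mul, h1, h2]
      rw [Finset.sum_congr rfl hterm, Finset.sum_range_sub']
      simp [hamp]
    have hxcb : (φ μ - a) * (cp - b) = 1 - φ μ * b := by
      rw [mul_sub, hxcp, sub_mul, hab1]; abel
    have hnorm : ‖φ μ * b‖ < 1 := by
      have hb1 : (0 : ℝ) < ‖b‖ * ‖(1 : A)‖ + 1 := by positivity
      calc ‖φ μ * b‖ ≤ ‖φ μ‖ * ‖b‖ := norm_mul_le _ _
      _ = ‖μ‖ * (‖b‖ * ‖(1 : A)‖) := by rw [hφ, norm_algebraMap]; ring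
      _ ≤ ‖μ‖ * (‖b‖ * ‖(1 : A)‖ + 1) := by nlinarith [norm_nonneg μ]
      _ < (‖b‖ * ‖(1 : A)‖ + 1)⁻¹ * (‖b‖ * ‖(1 : A)‖ + 1) := by
        exact mul_lt_mul_of_pos_right hdist hb1
      _ = 1 := inv_mul_cancel₀ (ne_of_gt hb1)
    set u : Aˣ := Units.oneSub (φ μ * b) hnorm with hu_def
    have hu_val : (↑u : A) = 1 - φ μ * b := rfl
    have hcmu : ∀ (c : ℂ) (y : A), Commute (φ c) y := fun c y => Algebra.commutes c y
    have hcax : Commute a cp :=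
      Commute.sum_right _ _ _ fun i _ =>
        ((hcmu _ a).symm.mul_right (((Commute.refl a).pow_right i).mul_right hca))
    have hx_cpb : Commute (φ μ - a) (cp - b) :=
      ((hcmu μ cp).sub_right (hcmu μ b)).sub_left (hcax.sub_right hcab)
    have hx_u : Commute (φ μ - a) (↑u : A) := by
      rw [hu_val]
      have h : Commute (φ μ - a) (φ μ * b) :=
        (hcmu μ (φ μ * b)).sub_left ((hcmu μ a).symm.mul_right hcab)
      exact (Commute.one_right _).sub_right h
    have hx_u' : Commute (φ μ - a) (↑u⁻¹ : A) := hx_u.units_inv_right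
    have hmain1 : (φ μ - a) * ((cp - b) * ↑u⁻¹) = 1 := by
      rw [← mul_assoc, hxcb, ← hu_val, u.mul_inv]
    have hmain2 : ((cp - b) * ↑u⁻¹) * (φ μ - a) = 1 := by
      calc ((cp - b) * ↑u⁻¹) * (φ μ - a)
          = (cp - b) * ((φ μ - a) * ↑u⁻¹) := by rw [mul_assoc, ← hx_u'.eq]
      _ = ((φ μ - a) * (cp - b)) * ↑u⁻¹ := by rw [← mul_assoc, ← hx_cpb.eq]
      _ = 1 := by rw [hxcb, ← hu_val, u.mul_inv]
    exact ⟨⟨φ μ - a, (cp - b) * ↑u⁻¹, hmain1, hmain2⟩, rfl⟩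
  · rintro ⟨-, p, hp0, hpp, hap, ⟨k, hk1, hapk⟩, hu⟩
    obtain ⟨u, hu⟩ := hu
    have hca : Commute a p := hap
    have hcau : Commute a ↑u := by rw [hu]; exact (Commute.refl a).add_right hca
    have hcpu : Commute p ↑u := by rw [hu]; exact hca.symm.add_right (Commute.refl p)
    have hcau' : Commute a ↑u⁻¹ := hcau.units_inv_right
    have hcpu' : Commute p ↑u⁻¹ := hcpu.units_inv_right
    set b : A := ↑u⁻¹ * (1 - p) with hb_def
    have key : (↑u : A) * (1 - p) = a * (1 - p) := by
      calc (↑u : A) * (1 - p) = a + p - (a * p + p * p) := by rw [hu]; noncomm_ring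
      _ = a - a * p := by rw [hpp]; abel
      _ = a * (1 - p) := by rw [mul_sub, mul_one]
    have hba : b * a = 1 - p := by
      calc b * a = ↑u⁻¹ * ((1 - p) * a) := by rw [hb_def, mul_assoc]
      _ = ↑u⁻¹ * (a * (1 - p)) := by rw [mul_sub, sub_mul, one_mul, mul_one, hap]
      _ = ↑u⁻¹ * (↑u * (1 - p)) := by rw [key]
      _ = 1 - p := by rw [← mul_assoc, u.inv_mul, one_mul]
    have hab : a * b = 1 - p := by
      calc a * b = (a * ↑u⁻¹) * (1 - p) := by rw [hb_def, mul_assoc]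
      _ = (↑u⁻¹ * a) * (1 - p) := by rw [hcau'.eq]
      _ = ↑u⁻¹ * (↑u * (1 - p)) := by rw [mul_assoc, key]
      _ = 1 - p := by rw [← mul_assoc, u.inv_mul, one_mul]
    have hkp : a ^ k * p = 0 := by
      have h := hca.mul_pow k
      rw [idem_pow' hpp k hk1] at h
      rw [← h, hapk]
    have hc1p : Commute (1 - p) (↑u⁻¹ : A) := (Commute.one_left _).sub_left hcpu'
    refine ⟨⟨b, k, ?_, ?_, ?_⟩, ?_⟩
    · rw [hab, hba]
    · calc b * a * b = (1 - p) * (↑u⁻¹ * (1 - p)) := by rw [hba, hb_def]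
      _ = ↑u⁻¹ * ((1 - p) * (1 - p)) := by rw [← mul_assoc, hc1p.eq, mul_assoc]
      _ = b := by
          rw [hb_def]; congr 1
          have h : (1 - p) * (1 - p) = 1 - p - p + p * p := by noncomm_ring
          rw [h, hpp]; abel
    · calc a ^ k * b * a = a ^ k * (b * a) := by rw [mul_assoc]
      _ = a ^ k * (1 - p) := by rw [hba]
      _ = a ^ k := by rw [mul_sub, mul_one, hkp, sub_zero]
    · intro ha
      obtain ⟨v, hv⟩ := ha
      have h1 : (↑v⁻¹ : A) ^ k * a ^ k = 1 := by
        have h : (↑v⁻¹ : A) ^ k * (↑v : A) ^ k = 1 := by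
          rw [← Units.val_pow_eq_pow_val, ← Units.val_pow_eq_pow_val, ← Units.val_mul,
            inv_pow, inv_mul_cancel, Units.val_one]
        rw [← hv, h]
      have hp' : p = 0 := by
        calc p = ((↑v⁻¹ : A) ^ k * a ^ k) * p := by rw [h1, one_mul]
        _ = (↑v⁻¹ : A) ^ k * (a ^ k * p) := by rw [mul_assoc]
        _ = 0 := by rw [hkp, mul_zero]
      exact hp0 hp'
end
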